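/- arXiv:math/0403088 — 6 statements merged into one kernel-verified Lean document; each statement's English description precedes it below -/
import Mathlib

section
/- Let M^I = ⊕_{i=1}^{m^I} J_{c_i} with c_1 ≥ ... ≥ c_{m^I} and N^I = ⊕_{j=1}^{n^I} J_{f_j} with f_1 ≥ ... ≥ f_{n^I} be preinjective Kronecker representations over an algebraically closed field. Define u_1 = max{j : c_j > f_1}, v_l = max{i : c_{u_l+1} ≤ f_i}, u_l = max{j : c_j > f_{v_{l−1}+1}}, with u_w = m^I. Then N^I embeds as a subrepresentation of M^I if and only if v_{w−1} = v_w = n^I and for all 0 ≤ i ≤ w−2: Σ_{j=v_i+1}^{v_{w−1}} f_j ≤ Σ_{j=u_{i+1}+1}^{u_w} c_j and Σ_{j=v_i+1}^{v_{w−1}} (f_j − 1) ≤ Σ_{j=u_{i+1}+1}^{u_w} (c_j − 1). -/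
open Matrix

/-- The map `α` of the preinjective Kronecker representation `⊕ᵢ J_{c i}`:
block diagonal with blocks `[I 0] : K^k → K^{k-1}`. -/
def JsumA (K : Type*) [Field K] (m : ℕ) (c : ℕ → ℕ) :
    Matrix (Σ i : Fin m, Fin (c (i.1 + 1) - 1)) (Σ i : Fin m, Fin (c (i.1 + 1))) K :=
  fun x y => if x.1 = y.1 ∧ (x.2 : ℕ) = (y.2 : ℕ) then 1 else 0

/-- The map `β` of `⊕ᵢ J_{c i}`: block diagonal with blocks `[0 I] : K^k → K^{k-1}`. -/
def JsumB (K : Type*) [Field K] (m : ℕ) (c : ℕ → ℕ) :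
    Matrix (Σ i : Fin m, Fin (c (i.1 + 1) - 1)) (Σ i : Fin m, Fin (c (i.1 + 1))) K :=
  fun x y => if x.1 = y.1 ∧ (y.2 : ℕ) = (x.2 : ℕ) + 1 then 1 else 0

/-!
Write `N = ⊕ⱼ J_{f j}` and `M = ⊕ᵢ J_{c i}`. Since `Hom(J_a, J_b) = 0` for `a < b`, an
embedding `N → M` sends the summands `J_{f j}` with `j > v l` into the summands `J_{c i}` with
`i > u (l + 1)`, and comparing dimensions at both vertices gives the two inequalities; the same
count with no room at all left in `M` forces `v (w - 1) = n`.

Conversely, line up the basis vectors of the second vertex ("cells") of both sides, the summands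
with larger index lying lower. The inequalities say that every block `J_{c i}` overlapping the
cells of a run `J_{f j}` satisfies `c i ≤ f j`, so each run can be mapped to the blocks it
overlaps by shift maps `J_{f j} → J_{c i}`, and the `J_1` summands of `N` to `J_1` summands of
`M`. Every row of the resulting matrix `ψ` meets at most two runs, and `ψ` is triangular for the
order eliminating the cells top-down, except those lying in a block that straddles the run below,
which are eliminated afterwards, bottom-up. The kernel of `φ` is killed by `α` and `β`, so it lies
in the `J_1` summands, on which `φ` is a matching.
-/

namespace Kronecker

open Finset

def tailSum (n : ℕ) (g : ℕ → ℕ) (p : ℕ) : ℕ := ∑ k ∈ Icc (p + 1) n, g k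

section TailSum

variable {n : ℕ} {g : ℕ → ℕ}

lemma tailSum_eq_sum_Ico (p : ℕ) : tailSum n g p = ∑ k ∈ Ico p n, g (k + 1) := by
  rw [tailSum, sum_Ico_add' g p n 1, Ico_add_one_right_eq_Icc]

lemma tailSum_antitone : Antitone (tailSum n g) := fun _ _ h =>
  sum_le_sum_of_subset (Icc_subset_Icc (by omega) le_rfl)

lemma tailSum_eq_add {p : ℕ} (hp : p < n) :
    tailSum n g p = tailSum n g (p + 1) + g (p + 1) := by
  rw [tailSum_eq_sum_Ico, tailSum_eq_sum_Ico, sum_eq_sum_Ico_succ_bot hp, add_comm]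

lemma tailSum_self : tailSum n g n = 0 := by
  simp [tailSum]

lemma exists_tailSum_le_lt {p : ℕ} (hp : p < tailSum n g 0) :
    ∃ k < n, tailSum n g (k + 1) ≤ p ∧ p < tailSum n g k := by
  have hex : ∃ k, tailSum n g k ≤ p := ⟨n, by simp [tailSum_self]⟩
  have hpos : Nat.find hex ≠ 0 := fun h => (Nat.find_spec hex).not_gt (h ▸ hp)
  have hle : Nat.find hex ≤ n := Nat.find_min' hex (by simp [tailSum_self])
  refine ⟨Nat.find hex - 1, by omega, ?_, not_le.mp (Nat.find_min hex (by omega))⟩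
  rw [Nat.sub_add_cancel (Nat.pos_of_ne_zero hpos)]
  exact Nat.find_spec hex

lemma sub_le_tailSum {p : ℕ} (h : ∀ k, p < k → k ≤ n → 1 ≤ g k) : n - p ≤ tailSum n g p := by
  have := card_nsmul_le_sum (Icc (p + 1) n) g 1 fun k hk => by
    rw [mem_Icc] at hk; exact h k (by omega) hk.2
  simpa [tailSum] using this

lemma tailSum_le_sub {p : ℕ} (h : ∀ k, p < k → k ≤ n → g k ≤ 1) : tailSum n g p ≤ n - p := by
  have := sum_le_card_nsmul (Icc (p + 1) n) g 1 fun k hk => by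
    rw [mem_Icc] at hk; exact h k (by omega) hk.2
  simpa [tailSum] using this

lemma card_filter_le_fst_eq_tailSum (F : ℕ → ℕ) (p : ℕ) :
    (univ.filter fun y : Σ j : Fin n, Fin (F (j.1 + 1)) => p ≤ (y.1 : ℕ)).card =
      tailSum n F p := by
  rw [card_filter, ← univ_sigma_univ, sum_sigma, tailSum_eq_sum_Ico]
  have hblock (a : Fin n) : (∑ _s : Fin (F (a + 1)), if p ≤ (a : ℕ) then 1 else 0) =
      if p ≤ (a : ℕ) then F (a + 1) else 0 := by
    split_ifs <;> simp
  rw [sum_congr rfl fun a _ => hblock a,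
    Fin.sum_univ_eq_sum_range (fun k => if p ≤ k then F (k + 1) else 0), ← sum_filter]
  congr 1
  ext k
  simp only [mem_filter, mem_range, mem_Ico]
  omega

end TailSum

variable {K : Type*} [Field K]

lemma sigma_fin_ext {m : ℕ} {a : Fin m → ℕ} {x y : Σ i : Fin m, Fin (a i)}
    (h₁ : (x.1 : ℕ) = y.1) (h₂ : (x.2 : ℕ) = y.2) : x = y :=
  Sigma.ext (Fin.ext h₁) ((Fin.heq_ext_iff (congrArg a (Fin.ext h₁))).mpr h₂)

lemma card_le_card_of_mulVecLin_injective {ι κ : Type*} [Fintype ι] [Fintype κ]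
    {M : Matrix ι κ K} (hM : Function.Injective M.mulVecLin) (S : Finset κ) (T : Finset ι)
    (h : ∀ z ∉ T, ∀ y ∈ S, M z y = 0) : S.card ≤ T.card := by
  let E := Function.ExtendByZero.linearMap K ((↑) : S → κ)
  have hL : Function.Injective
      (LinearMap.funLeft K K ((↑) : T → ι) ∘ₗ M.mulVecLin ∘ₗ E) := by
    rw [← LinearMap.ker_eq_bot, LinearMap.ker_eq_bot']
    intro x hx
    have hE : M.mulVecLin (E x) = M.mulVecLin 0 := by
      rw [map_zero]
      funext z
      by_cases hz : z ∈ T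
      · exact congrFun hx ⟨z, hz⟩
      refine Fintype.sum_eq_zero _ fun y => ?_
      show M z y * E x y = 0
      by_cases hy : y ∈ S
      · rw [h z hz y hy, zero_mul]
      · rw [Function.ExtendByZero.linearMap_apply,
          Function.extend_apply' _ _ _ fun ⟨y', hy'⟩ => hy (hy' ▸ y'.2), Pi.zero_apply, mul_zero]
    funext y
    simpa [E, Subtype.val_injective.extend_apply] using congrFun (hM hE) y
  simpa using LinearMap.finrank_le_finrank_of_injective hL

lemma mulVecLin_injective_of_pivot {ι κ : Type*} [Fintype κ] {M : Matrix ι κ K} (key : κ → ℕ)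
    (h : ∀ y, ∃ z, M z y ≠ 0 ∧ ∀ y', M z y' ≠ 0 → y' = y ∨ key y' < key y) :
    Function.Injective M.mulVecLin := by
  rw [← LinearMap.ker_eq_bot, LinearMap.ker_eq_bot']
  intro x hx
  funext y
  induction hk : key y using Nat.strong_induction_on generalizing y with
  | _ k ih =>
    obtain ⟨z, hzy, hz⟩ := h y
    have hrow : (M *ᵥ x) z = M z y * x y := by
      refine Fintype.sum_eq_single y fun y' hy' => ?_
      show M z y' * x y' = 0
      rcases eq_or_ne (M z y') 0 with h0 | h0
      · rw [h0, zero_mul]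
      · rw [ih _ (hk ▸ (hz y' h0).resolve_left hy') y' rfl, Pi.zero_apply, mul_zero]
    have := congrFun hx z
    simp only [mulVecLin_apply, Pi.zero_apply, hrow] at this
    exact (mul_eq_zero.mp this).resolve_left hzy

section Jsum

variable {m : ℕ} {c : ℕ → ℕ}

lemma JsumA_mulVec (v : (Σ i : Fin m, Fin (c (i.1 + 1))) → K)
    (x : Σ i : Fin m, Fin (c (i.1 + 1) - 1)) :
    (JsumA K m c *ᵥ v) x = v ⟨x.1, Fin.castLE (Nat.sub_le _ _) x.2⟩ := by
  rw [mulVec, dotProduct, Fintype.sum_eq_single ⟨x.1, Fin.castLE (Nat.sub_le _ _) x.2⟩]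
  · simp [JsumA]
  · intro z hz
    rw [JsumA, if_neg, zero_mul]
    rintro ⟨h₁, h₂⟩
    exact hz (sigma_fin_ext (congrArg Fin.val h₁.symm) h₂.symm)

lemma JsumB_mulVec (v : (Σ i : Fin m, Fin (c (i.1 + 1))) → K)
    (x : Σ i : Fin m, Fin (c (i.1 + 1) - 1)) :
    (JsumB K m c *ᵥ v) x = v ⟨x.1, ⟨x.2 + 1, by omega⟩⟩ := by
  rw [mulVec, dotProduct, Fintype.sum_eq_single ⟨x.1, ⟨x.2 + 1, by omega⟩⟩]
  · simp [JsumB]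
  · intro z hz
    rw [JsumB, if_neg, zero_mul]
    rintro ⟨h₁, h₂⟩
    exact hz (sigma_fin_ext (congrArg Fin.val h₁.symm) h₂)

lemma JsumA_mul_apply {ι : Type*} (M : Matrix (Σ i : Fin m, Fin (c (i.1 + 1))) ι K)
    (x : Σ i : Fin m, Fin (c (i.1 + 1) - 1)) (y : ι) :
    (JsumA K m c * M) x y = M ⟨x.1, Fin.castLE (Nat.sub_le _ _) x.2⟩ y :=
  JsumA_mulVec (fun z => M z y) x

lemma JsumB_mul_apply {ι : Type*} (M : Matrix (Σ i : Fin m, Fin (c (i.1 + 1))) ι K)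
    (x : Σ i : Fin m, Fin (c (i.1 + 1) - 1)) (y : ι) :
    (JsumB K m c * M) x y = M ⟨x.1, ⟨x.2 + 1, by omega⟩⟩ y :=
  JsumB_mulVec (fun z => M z y) x

lemma mul_JsumA_apply {ι : Type*} (M : Matrix ι (Σ i : Fin m, Fin (c (i.1 + 1) - 1)) K)
    (x : ι) (y : Σ i : Fin m, Fin (c (i.1 + 1))) :
    (M * JsumA K m c) x y =
      if h : (y.2 : ℕ) < c (y.1 + 1) - 1 then M x ⟨y.1, ⟨y.2, h⟩⟩ else 0 := by
  split_ifs with h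
  · rw [mul_apply, Fintype.sum_eq_single ⟨y.1, ⟨y.2, h⟩⟩]
    · simp [JsumA]
    · intro z hz
      rw [JsumA, if_neg, mul_zero]
      rintro ⟨h₁, h₂⟩
      exact hz (sigma_fin_ext (congrArg Fin.val h₁) h₂)
  · refine Fintype.sum_eq_zero _ fun z => ?_
    show M x z * JsumA K m c z y = 0
    rw [JsumA, if_neg, mul_zero]
    rintro ⟨h₁, h₂⟩
    have := z.2.isLt
    rw [h₂, h₁] at this
    exact h this

lemma mul_JsumB_apply {ι : Type*} (M : Matrix ι (Σ i : Fin m, Fin (c (i.1 + 1) - 1)) K)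
    (x : ι) (y : Σ i : Fin m, Fin (c (i.1 + 1))) :
    (M * JsumB K m c) x y =
      if h : 0 < (y.2 : ℕ) then M x ⟨y.1, ⟨y.2 - 1, by omega⟩⟩ else 0 := by
  split_ifs with h
  · rw [mul_apply, Fintype.sum_eq_single ⟨y.1, ⟨y.2 - 1, by omega⟩⟩]
    · simp [JsumB, Nat.sub_add_cancel h]
    · intro z hz
      rw [JsumB, if_neg, mul_zero]
      rintro ⟨h₁, h₂⟩
      exact hz (sigma_fin_ext (congrArg Fin.val h₁) (by dsimp only; omega))
  · refine Fintype.sum_eq_zero _ fun z => ?_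
    show M x z * JsumB K m c z y = 0
    rw [JsumB, if_neg, mul_zero]
    omega

end Jsum

/-- `Hom(J_a, J_b) = 0` for `a < b`, in coordinates: `g r t` is the entry of the first component
of a morphism `J_a → J_b`, extended by zero. -/
lemma eq_zero_of_lt_of_shift_invariant {a b : ℕ} (hab : a < b) {g : ℕ → ℕ → K}
    (hg : ∀ r t, a ≤ t → g r t = 0) (hdiag : ∀ r < b - 1, ∀ t, g (r + 1) (t + 1) = g r t)
    (hbot : ∀ r < b - 1, g (r + 1) 0 = 0) (htop : ∀ r < b - 1, g r (a - 1) = 0)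
    {r : ℕ} (hr : r < b) (t : ℕ) : g r t = 0 := by
  have hshift (k : ℕ) : ∀ r t, r + k < b → g (r + k) (t + k) = g r t := by
    induction k with
    | zero => simp
    | succ k ih =>
      intro r t h
      rw [← add_assoc, ← add_assoc, hdiag _ (by omega), ih r t (by omega)]
  rcases le_or_gt a t with hat | hta
  · exact hg r t hat
  rcases le_or_gt r t with hrt | htr
  · rw [← hshift (a - 1 - t) r t (by omega), show t + (a - 1 - t) = a - 1 by omega]
    exact htop _ (by omega)
  · obtain ⟨s, rfl⟩ : ∃ s, r = s + 1 + t := ⟨r - t - 1, by omega⟩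
    simpa using (hshift t (s + 1) 0 (by omega)).trans (hbot s (by omega))

section Morphism

variable {m n : ℕ} {c f : ℕ → ℕ}

def IsMorphism
    (φ : Matrix (Σ i : Fin m, Fin (c (i.1 + 1))) (Σ j : Fin n, Fin (f (j.1 + 1))) K)
    (ψ : Matrix (Σ i : Fin m, Fin (c (i.1 + 1) - 1)) (Σ j : Fin n, Fin (f (j.1 + 1) - 1)) K) :
    Prop :=
  JsumA K m c * φ = ψ * JsumA K n f ∧ JsumB K m c * φ = ψ * JsumB K n f

def sigmaEntry {a : Fin m → ℕ} {b : Fin n → ℕ}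
    (M : Matrix (Σ i : Fin m, Fin (a i)) (Σ j : Fin n, Fin (b j)) K) (i : Fin m) (j : Fin n)
    (r t : ℕ) : K :=
  if h : r < a i ∧ t < b j then M ⟨i, ⟨r, h.1⟩⟩ ⟨j, ⟨t, h.2⟩⟩ else 0

lemma sigmaEntry_mk {a : Fin m → ℕ} {b : Fin n → ℕ}
    (M : Matrix (Σ i : Fin m, Fin (a i)) (Σ j : Fin n, Fin (b j)) K) (x : Σ i : Fin m, Fin (a i))
    (y : Σ j : Fin n, Fin (b j)) : sigmaEntry M x.1 y.1 x.2 y.2 = M x y := by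
  simp [sigmaEntry]

namespace IsMorphism

variable {φ : Matrix (Σ i : Fin m, Fin (c (i.1 + 1))) (Σ j : Fin n, Fin (f (j.1 + 1))) K}
  {ψ : Matrix (Σ i : Fin m, Fin (c (i.1 + 1) - 1)) (Σ j : Fin n, Fin (f (j.1 + 1) - 1)) K}

lemma sigmaEntry_eq (h : IsMorphism φ ψ) (i : Fin m) (j : Fin n) {r : ℕ}
    (hr : r < c (i.1 + 1) - 1) (t : ℕ) : sigmaEntry φ i j r t = sigmaEntry ψ i j r t := by
  by_cases ht : t < f (j.1 + 1)
  · have := congrFun (congrFun h.1 ⟨i, ⟨r, hr⟩⟩) ⟨j, ⟨t, ht⟩⟩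
    rw [JsumA_mul_apply, mul_JsumA_apply] at this
    rw [sigmaEntry, dif_pos ⟨by omega, ht⟩]
    refine this.trans ?_
    by_cases ht' : t < f (j.1 + 1) - 1 <;> simp [sigmaEntry, hr, ht']
  · simp [sigmaEntry, ht, show ¬ t < f (j.1 + 1) - 1 by omega]

lemma sigmaEntry_succ_succ (h : IsMorphism φ ψ) (i : Fin m) (j : Fin n) {r : ℕ}
    (hr : r < c (i.1 + 1) - 1) (t : ℕ) :
    sigmaEntry φ i j (r + 1) (t + 1) = sigmaEntry ψ i j r t := by
  by_cases ht : t + 1 < f (j.1 + 1)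
  · have := congrFun (congrFun h.2 ⟨i, ⟨r, hr⟩⟩) ⟨j, ⟨t + 1, ht⟩⟩
    rw [JsumB_mul_apply, mul_JsumB_apply] at this
    rw [sigmaEntry, dif_pos ⟨by omega, ht⟩]
    refine this.trans ?_
    simp [sigmaEntry, hr, show t < f (j.1 + 1) - 1 by omega]
  · simp [sigmaEntry, ht, show ¬ t < f (j.1 + 1) - 1 by omega]

lemma sigmaEntry_succ_zero (h : IsMorphism φ ψ) (i : Fin m) (j : Fin n) {r : ℕ}
    (hr : r < c (i.1 + 1) - 1) : sigmaEntry φ i j (r + 1) 0 = 0 := by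
  by_cases hf : 0 < f (j.1 + 1)
  · have := congrFun (congrFun h.2 ⟨i, ⟨r, hr⟩⟩) ⟨j, ⟨0, hf⟩⟩
    rw [JsumB_mul_apply, mul_JsumB_apply] at this
    simp [sigmaEntry, this]
  · simp [sigmaEntry, hf]

lemma fst_apply_eq_zero (h : IsMorphism φ ψ) {x : Σ i : Fin m, Fin (c (i.1 + 1))}
    {y : Σ j : Fin n, Fin (f (j.1 + 1))} (hlt : f (y.1 + 1) < c (x.1 + 1)) : φ x y = 0 := by
  rw [← sigmaEntry_mk φ x y]
  refine eq_zero_of_lt_of_shift_invariant hlt (fun r t ht => ?_) (fun r hr t => ?_)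
    (fun r hr => h.sigmaEntry_succ_zero _ _ hr) (fun r hr => ?_) x.2.isLt _
  · simp [sigmaEntry, show ¬ t < f (y.1 + 1) by omega]
  · rw [h.sigmaEntry_succ_succ _ _ hr, h.sigmaEntry_eq _ _ hr]
  · rw [h.sigmaEntry_eq _ _ hr]
    simp [sigmaEntry]

lemma snd_apply_eq_zero (h : IsMorphism φ ψ) {x : Σ i : Fin m, Fin (c (i.1 + 1) - 1)}
    {y : Σ j : Fin n, Fin (f (j.1 + 1) - 1)} (hlt : f (y.1 + 1) < c (x.1 + 1)) : ψ x y = 0 := by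
  have hφ := h.fst_apply_eq_zero (x := ⟨x.1, ⟨x.2, by omega⟩⟩) (y := ⟨y.1, ⟨y.2, by omega⟩⟩) hlt
  rw [← sigmaEntry_mk ψ x y, ← h.sigmaEntry_eq _ _ x.2.isLt]
  exact (sigmaEntry_mk φ _ _).trans hφ

lemma apply_eq_zero_of_mulVec_eq_zero (h : IsMorphism φ ψ)
    (hψ : Function.Injective ψ.mulVecLin)
    {x : (Σ j : Fin n, Fin (f (j.1 + 1))) → K} (hx : φ *ᵥ x = 0)
    (y : Σ j : Fin n, Fin (f (j.1 + 1))) (hy : 2 ≤ f (y.1 + 1)) : x y = 0 := by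
  have hA : JsumA K n f *ᵥ x = 0 := hψ <| by
    rw [mulVecLin_apply, mulVec_mulVec, ← h.1, ← mulVec_mulVec, hx, mulVec_zero, map_zero]
  have hB : JsumB K n f *ᵥ x = 0 := hψ <| by
    rw [mulVecLin_apply, mulVec_mulVec, ← h.2, ← mulVec_mulVec, hx, mulVec_zero, map_zero]
  obtain ⟨j, t, ht⟩ := y
  change 2 ≤ f (j.1 + 1) at hy
  by_cases htop : t < f (j.1 + 1) - 1
  · simpa [JsumA_mulVec] using congrFun hA ⟨j, ⟨t, htop⟩⟩
  · simpa [JsumB_mulVec, show t - 1 + 1 = t by omega] using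
      congrFun hB ⟨j, ⟨t - 1, by omega⟩⟩

lemma tailSum_le (h : IsMorphism φ ψ) (hφ : Function.Injective φ.mulVecLin)
    (hψ : Function.Injective ψ.mulVecLin) {p q : ℕ}
    (hdom : ∀ i < q, ∀ j, p ≤ j → j < n → f (j + 1) < c (i + 1)) :
    tailSum n f p ≤ tailSum m c q ∧ tailSum n (f · - 1) p ≤ tailSum m (c · - 1) q := by
  constructor
  · rw [← card_filter_le_fst_eq_tailSum, ← card_filter_le_fst_eq_tailSum]
    refine card_le_card_of_mulVecLin_injective hφ _ _ fun z hz y hy => h.fst_apply_eq_zero ?_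
    simp only [mem_filter, mem_univ, true_and, not_le] at hz hy
    exact hdom _ hz _ hy y.1.isLt
  · rw [← card_filter_le_fst_eq_tailSum (fun k => f k - 1),
      ← card_filter_le_fst_eq_tailSum (fun k => c k - 1)]
    refine card_le_card_of_mulVecLin_injective hψ _ _ fun z hz y hy => h.snd_apply_eq_zero ?_
    simp only [mem_filter, mem_univ, true_and, not_le] at hz hy
    exact hdom _ hz _ hy y.1.isLt

end IsMorphism

end Morphism

open Classical in
noncomputable def shiftMatrix {m n : ℕ} {a : Fin m → ℕ} {b : Fin n → ℕ} (Q : ℕ → ℕ → Prop)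
    (s : ℕ → ℕ → ℕ) : Matrix (Σ i : Fin m, Fin (a i)) (Σ j : Fin n, Fin (b j)) K :=
  of fun x y => if Q x.1 y.1 ∧ (y.2 : ℕ) = x.2 + s x.1 y.1 then 1 else 0

section ShiftMatrix

variable {m n : ℕ} {a : Fin m → ℕ} {b : Fin n → ℕ} {Q : ℕ → ℕ → Prop} {s : ℕ → ℕ → ℕ}

lemma shiftMatrix_apply_of_mem {x : Σ i : Fin m, Fin (a i)} {y : Σ j : Fin n, Fin (b j)}
    (hQ : Q x.1 y.1) (hs : (y.2 : ℕ) = x.2 + s x.1 y.1) : shiftMatrix (K := K) Q s x y = 1 := by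
  simp [shiftMatrix, hQ, hs]

lemma shiftMatrix_ne_zero_iff {x : Σ i : Fin m, Fin (a i)} {y : Σ j : Fin n, Fin (b j)} :
    shiftMatrix (K := K) Q s x y ≠ 0 ↔ Q x.1 y.1 ∧ (y.2 : ℕ) = x.2 + s x.1 y.1 := by
  classical
  simp [shiftMatrix]

end ShiftMatrix

lemma isMorphism_shiftMatrix {m n : ℕ} {c f : ℕ → ℕ} (Q : ℕ → ℕ → Prop) (s : ℕ → ℕ → ℕ)
    (hQ : ∀ i j, Q i j → c (i + 1) ≤ f (j + 1)) (hs : ∀ i j, s i j ≤ f (j + 1) - c (i + 1)) :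
    IsMorphism (shiftMatrix (K := K) Q s :
      Matrix (Σ i : Fin m, Fin (c (i.1 + 1))) (Σ j : Fin n, Fin (f (j.1 + 1))) K)
      (shiftMatrix Q s) := by
  classical
  constructor <;> ext x y <;> by_cases hq : Q x.1 y.1 <;>
    simp only [JsumA_mul_apply, mul_JsumA_apply, JsumB_mul_apply, mul_JsumB_apply, shiftMatrix,
      of_apply, Fin.val_castLE, hq, true_and, false_and, if_false, dite_eq_ite, ite_self]
  all_goals
    have := hQ _ _ hq
    have := hs x.1 y.1
    have := x.2.isLt
    split_ifs <;> first | rfl | (exfalso; omega)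

section Construction

variable (m n : ℕ) (c f : ℕ → ℕ)

def BlocksFit : Prop :=
  ∀ i < m, ∀ j < n, tailSum m (c · - 1) (i + 1) < tailSum n (f · - 1) j → c (i + 1) ≤ f (j + 1)

/-- Blocks are indexed from `0`: block `i` of `M` is `J_{c (i + 1)}`, and its cells occupy the
positions `[tailSum m (c · - 1) (i + 1), tailSum m (c · - 1) i)`; likewise run `j` of `N`. -/
def Overlap (i j : ℕ) : Prop :=
  tailSum m (c · - 1) (i + 1) < tailSum n (f · - 1) j ∧
    tailSum n (f · - 1) (j + 1) < tailSum m (c · - 1) i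

/-- The window of block `i` inside run `j` is aligned with the positions, except that a block
sticking out above the run is pushed down into it and (by truncated subtraction) one sticking out
below starts at the bottom of the run. -/
def shift (i j : ℕ) : ℕ :=
  min (tailSum m (c · - 1) (i + 1) - tailSum n (f · - 1) (j + 1)) (f (j + 1) - c (i + 1))

/-- The second alternative matches the `J_1` summands of `N` with the last summands of `M`. -/
def Linked (i j : ℕ) : Prop :=
  c (i + 1) ≤ f (j + 1) ∧ (Overlap m n c f i j ∨ f (j + 1) = 1 ∧ i + n = j + m)

/-- Cells lying in a block that starts below their run are eliminated last, bottom-up; all other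
cells first, top-down. -/
def IsLowerCell (j t : ℕ) : Prop :=
  ∃ i < m, tailSum m (c · - 1) (i + 1) < tailSum n (f · - 1) (j + 1) ∧
    tailSum n (f · - 1) (j + 1) + t < tailSum m (c · - 1) i

open Classical in
noncomputable def cellKey (j t : ℕ) : ℕ := if IsLowerCell m n c f j t then 2 * n - j else j

variable (K) in
noncomputable def emb₁ :
    Matrix (Σ i : Fin m, Fin (c (i.1 + 1))) (Σ j : Fin n, Fin (f (j.1 + 1))) K :=
  shiftMatrix (Linked m n c f) (shift m n c f)

variable (K) in
noncomputable def emb₂ :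
    Matrix (Σ i : Fin m, Fin (c (i.1 + 1) - 1)) (Σ j : Fin n, Fin (f (j.1 + 1) - 1)) K :=
  shiftMatrix (Linked m n c f) (shift m n c f)

lemma isMorphism_emb : IsMorphism (emb₁ K m n c f) (emb₂ K m n c f) :=
  isMorphism_shiftMatrix _ _ (fun _ _ h => h.1) fun _ _ => min_le_right _ _

variable {m n c f}

lemma cellKey_le {j : ℕ} (hj : j ≤ n) (t : ℕ) : cellKey m n c f j t ≤ 2 * n - j := by
  unfold cellKey
  split_ifs <;> omega

lemma not_overlap_of_add_two_le (hfit : BlocksFit m n c f) {i j j' : ℕ} (hi : i < m)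
    (hj' : j' < n) (hjj' : j + 2 ≤ j') (h : Overlap m n c f i j)
    (h' : Overlap m n c f i j') : False := by
  have hPj' : tailSum n (f · - 1) j' ≤ tailSum n (f · - 1) (j + 1 + 1) :=
    tailSum_antitone (by omega)
  have hfits := hfit i hi (j + 1) (by omega)
    (h'.1.trans_le (hPj'.trans (tailSum_antitone (by omega))))
  have hCi := tailSum_eq_add (g := (c · - 1)) hi
  have hPj := tailSum_eq_add (g := (f · - 1)) (show j + 1 < n by omega)
  simp only [Overlap] at h h' hCi hPj
  omega

lemma linked_of_mem (hfit : BlocksFit m n c f) {i j t : ℕ} (hi : i < m) (hj : j < n)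
    (ht : t < f (j + 1) - 1)
    (h₁ : tailSum m (c · - 1) (i + 1) ≤ tailSum n (f · - 1) (j + 1) + t)
    (h₂ : tailSum n (f · - 1) (j + 1) + t < tailSum m (c · - 1) i) :
    Linked m n c f i j ∧ shift m n c f i j ≤ t ∧ t - shift m n c f i j < c (i + 1) - 1 := by
  have hPj := tailSum_eq_add (g := (f · - 1)) hj
  have hCi := tailSum_eq_add (g := (c · - 1)) hi
  have hfits := hfit i hi j hj (by omega)
  refine ⟨⟨hfits, Or.inl ⟨by omega, by omega⟩⟩, ?_, ?_⟩ <;> simp only [shift] <;> omega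

lemma eq_or_cellKey_lt_of_le (hfit : BlocksFit m n c f) {i j t j' t' : ℕ} (hi : i < m)
    (hj : j < n) (hup : tailSum n (f · - 1) (j + 1) ≤ tailSum m (c · - 1) (i + 1))
    (h₁ : tailSum m (c · - 1) (i + 1) ≤ tailSum n (f · - 1) (j + 1) + t)
    (h₂ : tailSum n (f · - 1) (j + 1) + t < tailSum m (c · - 1) i)
    (ht : t < f (j + 1) - 1) (hov : Overlap m n c f i j')
    (ht' : t' = t - shift m n c f i j + shift m n c f i j') :
    j' = j ∧ t' = t ∨ cellKey m n c f j' t' < j := by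
  have hPj := tailSum_eq_add (g := (f · - 1)) hj
  have hCi := tailSum_eq_add (g := (c · - 1)) hi
  have hov_j : Overlap m n c f i j := ⟨by omega, by omega⟩
  have hfits := hfit i hi j hj hov_j.1
  simp only [shift, Nat.min_def] at ht'
  rcases lt_trichotomy j' j with hlt | rfl | hgt
  · right
    obtain rfl : j' + 1 = j := by
      by_contra hne
      exact not_overlap_of_add_two_le hfit hi hj (by omega) hov hov_j
    suffices ¬ IsLowerCell m n c f j' t' by
      rw [cellKey, if_neg this]
      omega
    rintro ⟨i₀, -, hl₁, hl₂⟩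
    simp only [Overlap] at hov
    rcases le_or_gt i i₀ with hii | hii
    · have := tailSum_antitone (n := m) (g := (c · - 1)) hii
      split_ifs at ht' <;> omega
    · have := tailSum_antitone (n := m) (g := (c · - 1)) (show i₀ + 1 ≤ i from hii)
      split_ifs at ht' <;> omega
  · exact Or.inl ⟨rfl, by split_ifs at ht' <;> omega⟩
  · have := tailSum_antitone (n := n) (g := (f · - 1)) (show j + 1 ≤ j' from hgt)
    simp only [Overlap] at hov
    omega

lemma eq_or_eq_succ_of_lt (hfit : BlocksFit m n c f) {i j t j' t' : ℕ} (hi : i < m)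
    (hlow : tailSum m (c · - 1) (i + 1) < tailSum n (f · - 1) (j + 1))
    (h₂ : tailSum n (f · - 1) (j + 1) + t < tailSum m (c · - 1) i)
    (hov : Overlap m n c f i j') (hj' : j' < n)
    (ht' : t' = t - shift m n c f i j + shift m n c f i j') : j' = j ∧ t' = t ∨ j' = j + 1 := by
  have hov_j : Overlap m n c f i j :=
    ⟨hlow.trans_le (tailSum_antitone (Nat.le_succ j)), by omega⟩
  have hP0 := tailSum_antitone (n := n) (g := (f · - 1)) (Nat.zero_le (j + 1))
  obtain ⟨k, hk, hk₁, hk₂⟩ :=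
    exists_tailSum_le_lt (show tailSum n (f · - 1) (j + 1) - 1 < tailSum n (f · - 1) 0 by omega)
  have hjk : j < k := by
    by_contra! hkj
    have := tailSum_antitone (n := n) (g := (f · - 1)) (show k + 1 ≤ j + 1 by omega)
    omega
  have hov_k : Overlap m n c f i k := ⟨by omega, by omega⟩
  rcases lt_trichotomy j' j with hlt | rfl | hgt
  · exact (not_overlap_of_add_two_le hfit hi hk (by omega) hov hov_k).elim
  · unfold shift at ht'
    exact Or.inl ⟨rfl, by omega⟩
  · refine Or.inr ?_
    by_contra hne
    exact not_overlap_of_add_two_le hfit hi hj' (by omega) hov_j hov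

/-- The pivot row of cell `t` of run `j` is the row of the block containing its position whose
window entry lands on it. -/
lemma exists_pivot (hfit : BlocksFit m n c f)
    (hcover : tailSum n (f · - 1) 0 ≤ tailSum m (c · - 1) 0) {j t : ℕ} (hj : j < n)
    (ht : t < f (j + 1) - 1) :
    ∃ i < m, ∃ r < c (i + 1) - 1, Linked m n c f i j ∧ t = r + shift m n c f i j ∧
      ∀ j' t', Overlap m n c f i j' → j' < n → t' = r + shift m n c f i j' →
        j' = j ∧ t' = t ∨ cellKey m n c f j' t' < cellKey m n c f j t := by
  have hPj := tailSum_eq_add (g := (f · - 1)) hj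
  by_cases hlow : IsLowerCell m n c f j t
  · have hkey : cellKey m n c f j t = 2 * n - j := if_pos hlow
    obtain ⟨i, hi, h₁, h₂⟩ := hlow
    obtain ⟨hlink, hs, hr⟩ := linked_of_mem hfit hi hj ht (by omega) h₂
    refine ⟨i, hi, _, hr, hlink, by omega, fun j' t' hov hj' ht' => ?_⟩
    rcases eq_or_eq_succ_of_lt hfit hi h₁ h₂ hov hj' ht' with h | rfl
    · exact Or.inl h
    · exact Or.inr (hkey ▸ (cellKey_le hj'.le t').trans_lt (by omega))
  · have hkey : cellKey m n c f j t = j := if_neg hlow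
    have hP0 := tailSum_antitone (n := n) (g := (f · - 1)) (Nat.zero_le j)
    obtain ⟨i, hi, h₁, h₂⟩ := exists_tailSum_le_lt (show tailSum n (f · - 1) (j + 1) + t <
      tailSum m (c · - 1) 0 by omega)
    have hup : tailSum n (f · - 1) (j + 1) ≤ tailSum m (c · - 1) (i + 1) :=
      not_lt.mp fun h => hlow ⟨i, hi, h, h₂⟩
    obtain ⟨hlink, hs, hr⟩ := linked_of_mem hfit hi hj ht h₁ h₂
    refine ⟨i, hi, _, hr, hlink, by omega, fun j' t' hov _ ht' => ?_⟩
    rw [hkey]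
    exact eq_or_cellKey_lt_of_le hfit hi hj hup h₁ h₂ ht hov ht'

theorem emb₂_injective (hfit : BlocksFit m n c f)
    (hcover : tailSum n (f · - 1) 0 ≤ tailSum m (c · - 1) 0) :
    Function.Injective (emb₂ K m n c f).mulVecLin := by
  refine mulVecLin_injective_of_pivot (fun y => cellKey m n c f y.1 y.2) fun y => ?_
  obtain ⟨i, hi, r, hr, hlink, ht, hothers⟩ := exists_pivot hfit hcover y.1.isLt y.2.isLt
  refine ⟨⟨⟨i, hi⟩, ⟨r, hr⟩⟩, shiftMatrix_ne_zero_iff.mpr ⟨hlink, ht⟩, fun y' hy' => ?_⟩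
  obtain ⟨⟨-, hov | ⟨hf, -⟩⟩, ht'⟩ := shiftMatrix_ne_zero_iff.mp hy'
  · exact (hothers _ _ hov y'.1.isLt ht').imp_left fun h => sigma_fin_ext h.1 h.2
  · have := y'.2.isLt
    omega

theorem emb₁_injective (hfit : BlocksFit m n c f)
    (hcover : tailSum n (f · - 1) 0 ≤ tailSum m (c · - 1) 0)
    (hmatch : ∀ j < n, f (j + 1) = 1 → ∃ i < m, i + n = j + m ∧ c (i + 1) = 1) :
    Function.Injective (emb₁ K m n c f).mulVecLin := by
  rw [← LinearMap.ker_eq_bot, LinearMap.ker_eq_bot']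
  intro x hx
  have hbig := (isMorphism_emb (K := K) m n c f).apply_eq_zero_of_mulVec_eq_zero
    (emb₂_injective hfit hcover) hx
  funext y
  by_cases hy : 2 ≤ f (y.1 + 1)
  · exact hbig y hy
  have hfy : f (y.1 + 1) = 1 := by have := y.2.isLt; omega
  obtain ⟨i, hi, hin, hci⟩ := hmatch y.1 y.1.isLt hfy
  have hrow := congrFun hx ⟨⟨i, hi⟩, ⟨0, by simp [hci]⟩⟩
  rw [mulVecLin_apply, mulVec, dotProduct, Fintype.sum_eq_single y] at hrow
  · rwa [emb₁, shiftMatrix_apply_of_mem ⟨by dsimp only; omega, Or.inr ⟨hfy, hin⟩⟩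
      (by simp only [shift]; omega), one_mul] at hrow
  · intro y' hne
    by_cases hy' : 2 ≤ f (y'.1 + 1)
    · rw [hbig y' hy', mul_zero]
    refine mul_eq_zero_of_left (not_not.mp fun h => ?_) _
    obtain ⟨⟨-, hov | ⟨-, hin'⟩⟩, ht'⟩ := shiftMatrix_ne_zero_iff.mp h
    · have hCi := tailSum_eq_add (g := (c · - 1)) hi
      have hPj := tailSum_eq_add (g := (f · - 1)) y'.1.isLt
      have := y'.2.isLt
      simp only [Overlap] at hov
      omega
    · exact hne (sigma_fin_ext (by simp only at hin'; omega) (by have := y'.2.isLt; omega))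

theorem exists_injective_morphism (hfit : BlocksFit m n c f)
    (hcover : tailSum n (f · - 1) 0 ≤ tailSum m (c · - 1) 0)
    (hmatch : ∀ j < n, f (j + 1) = 1 → ∃ i < m, i + n = j + m ∧ c (i + 1) = 1) :
    ∃ (φ : Matrix (Σ i : Fin m, Fin (c (i.1 + 1))) (Σ j : Fin n, Fin (f (j.1 + 1))) K)
      (ψ : Matrix (Σ i : Fin m, Fin (c (i.1 + 1) - 1)) (Σ j : Fin n, Fin (f (j.1 + 1) - 1)) K),
      Function.Injective φ.mulVecLin ∧ Function.Injective ψ.mulVecLin ∧ IsMorphism φ ψ :=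
  ⟨_, _, emb₁_injective hfit hcover hmatch, emb₂_injective hfit hcover, isMorphism_emb m n c f⟩

end Construction

lemma mem_filter_of_sup_pos {s : Finset ℕ} {p : ℕ → Prop} [DecidablePred p]
    (h : 0 < (s.filter p).sup id) : (s.filter p).sup id ∈ s.filter p := by
  have hne : (s.filter p).Nonempty := by
    by_contra hne
    rw [not_nonempty_iff_eq_empty] at hne
    simp [hne] at h
  obtain ⟨a, ha, he⟩ := exists_mem_eq_sup _ hne id
  rwa [he]

section Layers

variable {m n w : ℕ} {c f u v : ℕ → ℕ}

lemma v_le (hv0 : v 0 = 0)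
    (hv : ∀ l, 1 ≤ l → v l = ((Icc 1 n).filter (fun i => c (u l + 1) ≤ f i)).sup id) (l : ℕ) :
    v l ≤ n := by
  rcases l with _ | l
  · simp [hv0]
  · rw [hv _ (by omega)]
    exact Finset.sup_le fun b hb => (mem_Icc.mp (mem_filter.mp hb).1).2

lemma v_eq_of_u_eq (hc_zero : ∀ j, m < j → c j = 0) (hv0 : v 0 = 0)
    (hv : ∀ l, 1 ≤ l → v l = ((Icc 1 n).filter (fun i => c (u l + 1) ≤ f i)).sup id) {l : ℕ}
    (hl : 1 ≤ l) (hul : u l = m) : v l = n := by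
  refine le_antisymm (v_le hv0 hv l) ?_
  rcases Nat.eq_zero_or_pos n with hn | hn
  · omega
  rw [hv l hl]
  refine le_sup (f := id) (mem_filter.mpr ⟨mem_Icc.mpr ⟨hn, le_rfl⟩, ?_⟩)
  rw [hul, hc_zero _ (Nat.lt_succ_self m)]
  exact Nat.zero_le _

lemma exists_layer (hc_mono : ∀ i j, 1 ≤ i → i ≤ j → j ≤ m → c j ≤ c i)
    (hf_mono : ∀ i j, 1 ≤ i → i ≤ j → j ≤ n → f j ≤ f i) (hv0 : v 0 = 0)
    (hv : ∀ l, 1 ≤ l → v l = ((Icc 1 n).filter (fun i => c (u l + 1) ≤ f i)).sup id)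
    (hvw : v (w - 1) = n) {j : ℕ} (hj1 : 1 ≤ j) (hjn : j ≤ n) :
    ∃ l, l + 2 ≤ w ∧ v l < j ∧ ∀ i, u (l + 1) < i → i ≤ m → c i ≤ f j := by
  have hex : ∃ l, j ≤ v l := ⟨w - 1, hvw ▸ hjn⟩
  have hvl : j ≤ v (Nat.find hex) := Nat.find_spec hex
  have hl0 : Nat.find hex ≠ 0 := fun h => by rw [h, hv0] at hvl; omega
  have hlw : Nat.find hex ≤ w - 1 := Nat.find_min' hex (hvw ▸ hjn)
  have hsup := mem_filter_of_sup_pos (p := fun i => c (u (Nat.find hex) + 1) ≤ f i)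
    (s := Icc 1 n) (by rw [← hv _ (by omega)]; omega)
  rw [← hv _ (by omega), mem_filter, mem_Icc] at hsup
  refine ⟨Nat.find hex - 1, by omega, not_le.mp (Nat.find_min hex (by omega)), fun i hi him => ?_⟩
  rw [Nat.sub_add_cancel (Nat.pos_of_ne_zero hl0)] at hi
  calc c i ≤ c (u (Nat.find hex) + 1) := hc_mono _ _ (by omega) hi him
    _ ≤ f (v (Nat.find hex)) := hsup.2
    _ ≤ f j := hf_mono _ _ hj1 hvl hsup.1.2

lemma blocksFit_of_layers
    (hlayer : ∀ j, 1 ≤ j → j ≤ n →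
      ∃ l, l + 2 ≤ w ∧ v l < j ∧ ∀ i, u (l + 1) < i → i ≤ m → c i ≤ f j)
    (hcut : ∀ l, l + 2 ≤ w → tailSum n (f · - 1) (v l) ≤ tailSum m (c · - 1) (u (l + 1))) :
    BlocksFit m n c f := by
  intro i hi j hj hlt
  obtain ⟨l, hlw, hvl, hfit⟩ := hlayer (j + 1) (by omega) hj
  refine hfit _ (not_le.mp fun hle => ?_) (by omega)
  have := tailSum_antitone (n := n) (g := (f · - 1)) (show v l ≤ j by omega)
  have := tailSum_antitone (n := m) (g := (c · - 1)) hle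
  have := hcut l hlw
  omega

lemma tailSum_le_of_layers
    (hlayer : ∀ j, 1 ≤ j → j ≤ n →
      ∃ l, l + 2 ≤ w ∧ v l < j ∧ ∀ i, u (l + 1) < i → i ≤ m → c i ≤ f j)
    (hcut : ∀ l, l + 2 ≤ w → tailSum n (f · - 1) (v l) ≤ tailSum m (c · - 1) (u (l + 1))) :
    tailSum n (f · - 1) 0 ≤ tailSum m (c · - 1) 0 := by
  rcases Nat.eq_zero_or_pos n with rfl | hn
  · simp [tailSum_self]
  obtain ⟨l, hlw, hvl, -⟩ := hlayer 1 le_rfl hn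
  have := hcut l hlw
  rw [show v l = 0 by omega] at this
  exact this.trans (tailSum_antitone (Nat.zero_le _))

lemma exists_match_of_layers (hc_pos : ∀ j, 1 ≤ j → j ≤ m → 1 ≤ c j)
    (hf_pos : ∀ j, 1 ≤ j → j ≤ n → 1 ≤ f j)
    (hlayer : ∀ j, 1 ≤ j → j ≤ n →
      ∃ l, l + 2 ≤ w ∧ v l < j ∧ ∀ i, u (l + 1) < i → i ≤ m → c i ≤ f j)
    (hcut : ∀ l, l + 2 ≤ w → tailSum n f (v l) ≤ tailSum m c (u (l + 1))) :
    ∀ j < n, f (j + 1) = 1 → ∃ i < m, i + n = j + m ∧ c (i + 1) = 1 := by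
  intro j hj hf1
  obtain ⟨l, hlw, hvl, hfit⟩ := hlayer (j + 1) (by omega) hj
  have := sub_le_tailSum (p := j) fun k hk hkn => hf_pos k (by omega) hkn
  have := tailSum_antitone (n := n) (g := f) (show v l ≤ j by omega)
  have := tailSum_le_sub (n := m) (p := u (l + 1)) fun k hk hkm => hf1 ▸ hfit k hk hkm
  have := hcut l hlw
  refine ⟨j + m - n, by omega, by omega, le_antisymm ?_ (hc_pos _ (by omega) (by omega))⟩
  exact hf1 ▸ hfit _ (by omega) (by omega)

lemma lt_of_le_u (hc_mono : ∀ i j, 1 ≤ i → i ≤ j → j ≤ m → c j ≤ c i)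
    (hu : ∀ l, 1 ≤ l → u l = ((Icc 1 m).filter (fun j => f (v (l - 1) + 1) < c j)).sup id)
    {l : ℕ} (hl : 1 ≤ l) {i : ℕ} (hi : 1 ≤ i) (hiu : i ≤ u l) : f (v (l - 1) + 1) < c i := by
  have hsup := mem_filter_of_sup_pos (p := fun j => f (v (l - 1) + 1) < c j) (s := Icc 1 m)
    (by rw [← hu l hl]; omega)
  rw [← hu l hl, mem_filter, mem_Icc] at hsup
  exact hsup.2.trans_le (hc_mono _ _ hi hiu hsup.1.2)

lemma IsMorphism.tailSum_le_of_layer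
    {φ : Matrix (Σ i : Fin m, Fin (c (i.1 + 1))) (Σ j : Fin n, Fin (f (j.1 + 1))) K}
    {ψ : Matrix (Σ i : Fin m, Fin (c (i.1 + 1) - 1)) (Σ j : Fin n, Fin (f (j.1 + 1) - 1)) K}
    (h : IsMorphism φ ψ) (hφ : Function.Injective φ.mulVecLin)
    (hψ : Function.Injective ψ.mulVecLin) (hc_mono : ∀ i j, 1 ≤ i → i ≤ j → j ≤ m → c j ≤ c i)
    (hf_mono : ∀ i j, 1 ≤ i → i ≤ j → j ≤ n → f j ≤ f i)
    (hu : ∀ l, 1 ≤ l → u l = ((Icc 1 m).filter (fun j => f (v (l - 1) + 1) < c j)).sup id)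
    {l : ℕ} (hl : 1 ≤ l) :
    tailSum n f (v (l - 1)) ≤ tailSum m c (u l) ∧
      tailSum n (f · - 1) (v (l - 1)) ≤ tailSum m (c · - 1) (u l) :=
  h.tailSum_le hφ hψ fun _ hi _ hj hjn =>
    (hf_mono _ _ (by omega) (by omega) (by omega)).trans_lt (lt_of_le_u hc_mono hu hl (by omega) hi)

end Layers

end Kronecker

open Kronecker

theorem preinjective_subrep_iff_general (K : Type*) [Field K]
    (m n : ℕ) (c f : ℕ → ℕ)
    (hc_pos : ∀ j, 1 ≤ j → j ≤ m → 1 ≤ c j)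
    (hc_mono : ∀ i j, 1 ≤ i → i ≤ j → j ≤ m → c j ≤ c i)
    (hc_zero : ∀ j, m < j → c j = 0)
    (hf_pos : ∀ j, 1 ≤ j → j ≤ n → 1 ≤ f j)
    (hf_mono : ∀ i j, 1 ≤ i → i ≤ j → j ≤ n → f j ≤ f i)
    (u v : ℕ → ℕ) (hv0 : v 0 = 0)
    (hu : ∀ l, 1 ≤ l → u l =
      ((Finset.Icc 1 m).filter (fun j => f (v (l - 1) + 1) < c j)).sup id)
    (hv : ∀ l, 1 ≤ l → v l =
      ((Finset.Icc 1 n).filter (fun i => c (u l + 1) ≤ f i)).sup id)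
    (w : ℕ) (hw1 : 1 ≤ w) (hwu : u w = m) :
    (∃ (φ : Matrix (Σ i : Fin m, Fin (c (i.1 + 1))) (Σ j : Fin n, Fin (f (j.1 + 1))) K)
       (ψ : Matrix (Σ i : Fin m, Fin (c (i.1 + 1) - 1)) (Σ j : Fin n, Fin (f (j.1 + 1) - 1)) K),
        Function.Injective φ.mulVecLin ∧ Function.Injective ψ.mulVecLin ∧
        JsumA K m c * φ = ψ * JsumA K n f ∧ JsumB K m c * φ = ψ * JsumB K n f) ↔
    (v (w - 1) = n ∧ v w = n ∧ ∀ i, i + 2 ≤ w →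
      (∑ j ∈ Finset.Icc (v i + 1) (v (w - 1)), f j ≤
        ∑ j ∈ Finset.Icc (u (i + 1) + 1) (u w), c j) ∧
      (∑ j ∈ Finset.Icc (v i + 1) (v (w - 1)), (f j - 1) ≤
        ∑ j ∈ Finset.Icc (u (i + 1) + 1) (u w), (c j - 1))) := by
  constructor
  · rintro ⟨φ, ψ, hφ, hψ, hA, hB⟩
    have hcut (l : ℕ) (hl : 1 ≤ l) :=
      IsMorphism.tailSum_le_of_layer ⟨hA, hB⟩ hφ hψ hc_mono hf_mono hu hl
    have hvw1 : v (w - 1) = n := by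
      have h := (hcut w hw1).1
      rw [hwu, tailSum_self] at h
      have := sub_le_tailSum (p := v (w - 1)) fun k hk hkn => hf_pos k (by omega) hkn
      have := v_le hv0 hv (w - 1)
      omega
    refine ⟨hvw1, v_eq_of_u_eq hc_zero hv0 hv hw1 hwu, fun i hi => ?_⟩
    have := hcut (i + 1) (by omega)
    rw [Nat.add_sub_cancel] at this
    rw [hvw1, hwu]
    exact this
  · rintro ⟨hvw1, -, hcut⟩
    simp only [hvw1, hwu] at hcut
    have hlayer (j : ℕ) := exists_layer hc_mono hf_mono hv0 hv hvw1 (j := j)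
    obtain ⟨φ, ψ, hφ, hψ, hA, hB⟩ := exists_injective_morphism (K := K)
      (blocksFit_of_layers hlayer fun l hl => (hcut l hl).2)
      (tailSum_le_of_layers hlayer fun l hl => (hcut l hl).2)
      (exists_match_of_layers hc_pos hf_pos hlayer fun l hl => (hcut l hl).1)
    exact ⟨φ, ψ, hφ, hψ, hA, hB⟩

/-- Theorem 9: numerical criterion for the preinjective Kronecker
representation `N^I = ⊕ⱼ J_{f j}` to be a subrepresentation of `M^I = ⊕ᵢ J_{c i}`,
in terms of the indices `u l`, `v l`, `w` defined from the Kronecker invariants. -/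
theorem preinjective_subrep_iff (K : Type*) [Field K] [IsAlgClosed K]
    (m n : ℕ) (c f : ℕ → ℕ)
    (hc_pos : ∀ j, 1 ≤ j → j ≤ m → 1 ≤ c j)
    (hc_mono : ∀ i j, 1 ≤ i → i ≤ j → j ≤ m → c j ≤ c i)
    (hc_zero : ∀ j, m < j → c j = 0)
    (hf_pos : ∀ j, 1 ≤ j → j ≤ n → 1 ≤ f j)
    (hf_mono : ∀ i j, 1 ≤ i → i ≤ j → j ≤ n → f j ≤ f i)
    (hf_zero : ∀ j, n < j → f j = 0)
    (u v : ℕ → ℕ) (hv0 : v 0 = 0)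
    (hu : ∀ l, 1 ≤ l → u l =
      ((Finset.Icc 1 m).filter (fun j => f (v (l - 1) + 1) < c j)).sup id)
    (hv : ∀ l, 1 ≤ l → v l =
      ((Finset.Icc 1 n).filter (fun i => c (u l + 1) ≤ f i)).sup id)
    (w : ℕ) (hw1 : 1 ≤ w) (hwu : u w = m) (hwmin : ∀ l, 1 ≤ l → l < w → u l ≠ m) :
    (∃ (φ : Matrix (Σ i : Fin m, Fin (c (i.1 + 1))) (Σ j : Fin n, Fin (f (j.1 + 1))) K)
       (ψ : Matrix (Σ i : Fin m, Fin (c (i.1 + 1) - 1)) (Σ j : Fin n, Fin (f (j.1 + 1) - 1)) K),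
        Function.Injective φ.mulVecLin ∧ Function.Injective ψ.mulVecLin ∧
        JsumA K m c * φ = ψ * JsumA K n f ∧ JsumB K m c * φ = ψ * JsumB K n f) ↔
    (v (w - 1) = n ∧ v w = n ∧ ∀ i, i + 2 ≤ w →
      (∑ j ∈ Finset.Icc (v i + 1) (v (w - 1)), f j ≤
        ∑ j ∈ Finset.Icc (u (i + 1) + 1) (u w), c j) ∧
      (∑ j ∈ Finset.Icc (v i + 1) (v (w - 1)), (f j - 1) ≤
        ∑ j ∈ Finset.Icc (u (i + 1) + 1) (u w), (c j - 1))) :=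
  preinjective_subrep_iff_general K m n c f hc_pos hc_mono hc_zero hf_pos hf_mono u v hv0 hu hv w
    hw1 hwu
end

section
/- Let b_1 ≥ b_2 ≥ ... ≥ b_m and e_1 ≥ e_2 ≥ ... ≥ e_n be positive integers, and let g_{ij} = min(b_i, e_j). Let Φ be the block matrix (Φ_{ij})_{1≤i≤m, 1≤j≤n}, where Φ_{ij} is the b_i × e_j matrix of generic 'upper-right corner Toeplitz' form: its entries are zero outside the upper-right g_{ij} × g_{ij} corner, and that corner is an upper triangular Toeplitz matrix with constant diagonals x^{ij}_1, ..., x^{ij}_{g_{ij}}, all indeterminates being pairwise distinct. Then rank Φ = Σ_{i=1}^{min(m,n)} min(b_i, e_i). -/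
set_option maxHeartbeats 1000000
set_option synthInstance.maxHeartbeats 400000

open Matrix


/-- A down-closed filter on `Icc 1 M` is an initial segment. -/
lemma dc_eq_Icc (M : ℕ) (f : ℕ → ℕ)
    (hf : ∀ i j, 1 ≤ i → i ≤ j → j ≤ M → f j ≤ f i) (s : ℕ) :
    (Finset.Icc 1 M).filter (fun i => s < f i)
      = Finset.Icc 1 (((Finset.Icc 1 M).filter (fun i => s < f i)).card) := by
  set S := (Finset.Icc 1 M).filter (fun i => s < f i) with hS
  ext k
  simp only [Finset.mem_Icc]
  constructor
  · intro hk
    have hk' := hk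
    rw [hS, Finset.mem_filter, Finset.mem_Icc] at hk'
    refine ⟨hk'.1.1, ?_⟩
    have hsub : Finset.Icc 1 k ⊆ S := by
      intro i hi
      rw [Finset.mem_Icc] at hi
      rw [hS, Finset.mem_filter, Finset.mem_Icc]
      exact ⟨⟨hi.1, le_trans hi.2 hk'.1.2⟩,
        lt_of_lt_of_le hk'.2 (hf i k hi.1 hi.2 hk'.1.2)⟩
    have := Finset.card_le_card hsub
    simpa using this
  · rintro ⟨h1, h2⟩
    by_contra hk
    have hsub : S ⊆ Finset.Icc 1 (k - 1) := by
      intro j hj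
      have hj' := hj
      rw [hS, Finset.mem_filter, Finset.mem_Icc] at hj'
      rw [Finset.mem_Icc]
      refine ⟨hj'.1.1, ?_⟩
      by_contra hjk
      apply hk
      rw [hS, Finset.mem_filter, Finset.mem_Icc]
      exact ⟨⟨h1, le_trans (by omega) hj'.1.2⟩,
        lt_of_lt_of_le hj'.2 (hf k j h1 (by omega) hj'.1.2)⟩
    have := Finset.card_le_card hsub
    simp [Nat.card_Icc] at this
    omega

lemma min_card_eq (m n : ℕ) (b e : ℕ → ℕ)
    (hb_mono : ∀ i j, 1 ≤ i → i ≤ j → j ≤ m → b j ≤ b i)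
    (he_mono : ∀ i j, 1 ≤ i → i ≤ j → j ≤ n → e j ≤ e i) (s : ℕ) :
    min (((Finset.Icc 1 m).filter (fun i => s < b i)).card)
        (((Finset.Icc 1 n).filter (fun i => s < e i)).card)
      = ((Finset.Icc 1 (min m n)).filter (fun i => s < b i ∧ s < e i)).card := by
  set p := ((Finset.Icc 1 m).filter (fun i => s < b i)).card with hp
  set q := ((Finset.Icc 1 n).filter (fun i => s < e i)).card with hq
  have hA := dc_eq_Icc m b hb_mono s
  have hB := dc_eq_Icc n e he_mono s
  have hpm : p ≤ m := by
    have := Finset.card_filter_le (Finset.Icc 1 m) (fun i => s < b i)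
    simpa [Nat.card_Icc] using this
  have hqn : q ≤ n := by
    have := Finset.card_filter_le (Finset.Icc 1 n) (fun i => s < e i)
    simpa [Nat.card_Icc] using this
  have key : (Finset.Icc 1 (min m n)).filter (fun i => s < b i ∧ s < e i)
      = Finset.Icc 1 (min p q) := by
    ext i
    simp only [Finset.mem_filter, Finset.mem_Icc]
    constructor
    · rintro ⟨⟨h1, h2⟩, hb, he⟩
      have hiA : i ∈ (Finset.Icc 1 m).filter (fun i => s < b i) := by
        rw [Finset.mem_filter, Finset.mem_Icc]; exact ⟨⟨h1, by omega⟩, hb⟩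
      have hiB : i ∈ (Finset.Icc 1 n).filter (fun i => s < e i) := by
        rw [Finset.mem_filter, Finset.mem_Icc]; exact ⟨⟨h1, by omega⟩, he⟩
      rw [hA, Finset.mem_Icc] at hiA
      rw [hB, Finset.mem_Icc] at hiB
      exact ⟨h1, by omega⟩
    · rintro ⟨h1, h2⟩
      have hiA : i ∈ (Finset.Icc 1 m).filter (fun i => s < b i) := by
        rw [hA, Finset.mem_Icc]; exact ⟨h1, by omega⟩
      have hiB : i ∈ (Finset.Icc 1 n).filter (fun i => s < e i) := by
        rw [hB, Finset.mem_Icc]; exact ⟨h1, by omega⟩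
      rw [Finset.mem_filter, Finset.mem_Icc] at hiA hiB
      exact ⟨⟨h1, by omega⟩, hiA.2, hiB.2⟩
  rw [key, Nat.card_Icc]
  omega

lemma comb_identity (m n : ℕ) (b e : ℕ → ℕ)
    (hb_mono : ∀ i j, 1 ≤ i → i ≤ j → j ≤ m → b j ≤ b i)
    (he_mono : ∀ i j, 1 ≤ i → i ≤ j → j ≤ n → e j ≤ e i) :
    ∑ s ∈ Finset.range (e 1),
      min (((Finset.Icc 1 m).filter (fun i => s < b i)).card)
          (((Finset.Icc 1 n).filter (fun i => s < e i)).card)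
      = ∑ i ∈ Finset.Icc 1 (min m n), min (b i) (e i) := by
  have h1 : ∀ s, min (((Finset.Icc 1 m).filter (fun i => s < b i)).card)
          (((Finset.Icc 1 n).filter (fun i => s < e i)).card)
      = ∑ i ∈ Finset.Icc 1 (min m n), if s < b i ∧ s < e i then 1 else 0 := by
    intro s
    rw [min_card_eq m n b e hb_mono he_mono s, Finset.card_filter]
  simp only [h1]
  rw [Finset.sum_comm]
  apply Finset.sum_congr rfl
  intro i hi
  rw [Finset.mem_Icc] at hi
  have hie : min (b i) (e i) ≤ e 1 := by
    have : e i ≤ e 1 := he_mono 1 i le_rfl hi.1 (by omega)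
    omega
  have : ∑ s ∈ Finset.range (e 1), (if s < b i ∧ s < e i then 1 else 0)
      = ((Finset.range (e 1)).filter (fun s => s < b i ∧ s < e i)).card := by
    rw [Finset.card_filter]
  rw [this]
  have : (Finset.range (e 1)).filter (fun s => s < b i ∧ s < e i)
      = Finset.range (min (b i) (e i)) := by
    ext s
    simp only [Finset.mem_filter, Finset.mem_range]
    omega
  rw [this, Finset.card_range]

lemma card_fin_filter (M : ℕ) (f : ℕ → ℕ) (s : ℕ) :
    (Finset.univ.filter (fun i : Fin M => s < f (i.1 + 1))).card
      = ((Finset.Icc 1 M).filter (fun i => s < f i)).card := by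
  apply Finset.card_bij (fun i _ => i.1 + 1)
  · intro a ha
    rw [Finset.mem_filter] at ha ⊢
    rw [Finset.mem_Icc]
    exact ⟨⟨by omega, by omega⟩, ha.2⟩
  · intro a _ b _ h
    exact Fin.ext (by omega)
  · intro j hj
    rw [Finset.mem_filter, Finset.mem_Icc] at hj
    refine ⟨⟨j - 1, by omega⟩, ?_, show j - 1 + 1 = j by omega⟩
    rw [Finset.mem_filter]
    refine ⟨Finset.mem_univ _, ?_⟩
    simpa [Nat.sub_add_cancel hj.1.1] using hj.2

lemma submatrix_eq_one_mul_one {R α β γ δ : Type*} [CommRing R] [Fintype α] [Fintype β]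
    [DecidableEq α] [DecidableEq β]
    (A : Matrix α β R) (f : γ → α) (g : δ → β) :
    A.submatrix f g
      = ((1 : Matrix α α R).submatrix f id) * A * ((1 : Matrix β β R).submatrix id g) := by
  funext x y
  simp [Matrix.mul_apply, Matrix.one_apply, Matrix.submatrix_apply, Finset.sum_ite_eq,
    Finset.sum_ite_eq', ite_mul, mul_ite]

/-- The generic homomorphism matrix between regular Kronecker representations
concentrated at one point: block `(i,j)` has size `b (i+1) × e (j+1)` and is the
generic "upper-right corner Toeplitz" matrix: with `g = min (b (i+1)) (e (j+1))`,
the `(u,v)` entry (0-based) is the indeterminate `x^{ij}` of diagonal index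
`(e (j+1) - 1) + u - v` when `(e (j+1) - g) + u ≤ v`, and `0` otherwise; so the
block has constant diagonals `x^{ij}_1, …, x^{ij}_g` in its top-right `g × g`
triangular corner, all indeterminates being pairwise distinct. -/
noncomputable def genRR (K : Type*) [Field K] (m n : ℕ) (b e : ℕ → ℕ) :
    Matrix (Σ i : Fin m, Fin (b (i.1 + 1))) (Σ j : Fin n, Fin (e (j.1 + 1)))
      (FractionRing (MvPolynomial ((Fin m × Fin n) × ℕ) K)) :=
  fun x y =>
    if (e (y.1.1 + 1) - min (b (x.1.1 + 1)) (e (y.1.1 + 1))) + (x.2 : ℕ) ≤ (y.2 : ℕ) then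
      algebraMap (MvPolynomial ((Fin m × Fin n) × ℕ) K) _
        (MvPolynomial.X ((x.1, y.1), (e (y.1.1 + 1) - 1) + (x.2 : ℕ) - (y.2 : ℕ)))
    else 0

abbrev RRField (K : Type*) [Field K] (m n : ℕ) := FractionRing (MvPolynomial ((Fin m × Fin n) × ℕ) K)
abbrev RowTy (m : ℕ) (b : ℕ → ℕ) := Σ i : Fin m, Fin (b (i.1 + 1))
abbrev ColTy (n : ℕ) (e : ℕ → ℕ) := Σ j : Fin n, Fin (e (j.1 + 1))

section Aux2
variable (K : Type*) [Field K] (m n : ℕ) (b e : ℕ → ℕ)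

/-- The block shift-up endomorphism. -/
noncomputable def genT : (RowTy m b → RRField K m n) →ₗ[RRField K m n] (RowTy m b → RRField K m n) where
  toFun w x := if h : (x.2 : ℕ) + 1 < b (x.1.1 + 1) then w ⟨x.1, ⟨(x.2 : ℕ) + 1, h⟩⟩ else 0
  map_add' u v := by
    funext x
    by_cases h : (x.2 : ℕ) + 1 < b (x.1.1 + 1) <;> simp [h]
  map_smul' c u := by
    funext x
    by_cases h : (x.2 : ℕ) + 1 < b (x.1.1 + 1) <;> simp [h]

/-- Column of the generic matrix. -/
noncomputable def colRR (y : ColTy n e) : RowTy m b → RRField K m n := fun x => genRR K m n b e x y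

lemma genT_pow_apply (s : ℕ) (w : RowTy m b → RRField K m n) (x : RowTy m b) :
    ((genT K m n b) ^ s) w x
      = if h : (x.2 : ℕ) + s < b (x.1.1 + 1) then w ⟨x.1, ⟨(x.2 : ℕ) + s, h⟩⟩ else 0 := by
  induction s generalizing w with
  | zero =>
    simp only [pow_zero, Module.End.one_apply]
    rw [dif_pos (by omega : (x.2 : ℕ) + 0 < b (x.1.1 + 1))]
    exact congrArg w (Sigma.ext rfl (heq_of_eq (Fin.ext (by simp))))
  | succ s ih =>
    rw [pow_succ, Module.End.mul_apply, ih]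
    by_cases h : (x.2 : ℕ) + s < b (x.1.1 + 1)
    · rw [dif_pos h]
      show (if h' : ((⟨(x.2 : ℕ) + s, h⟩ : Fin (b (x.1.1+1))) : ℕ) + 1 < b (x.1.1 + 1)
          then w ⟨x.1, ⟨_ + 1, h'⟩⟩ else 0) = _
      by_cases h2 : (x.2 : ℕ) + (s + 1) < b (x.1.1 + 1)
      · rw [dif_pos (show ((⟨(x.2 : ℕ) + s, h⟩ : Fin (b (x.1.1+1))) : ℕ) + 1 < b (x.1.1+1) by
          simpa using by omega), dif_pos h2]
        exact congrArg w (Sigma.ext rfl (heq_of_eq (Fin.ext (by simp; omega))))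
      · rw [dif_neg (by simpa using by omega), dif_neg h2]
    · rw [dif_neg h, dif_neg (by omega)]

lemma colRR_shift (j : Fin n) (v v' : Fin (e (j.1 + 1))) (hv : (v' : ℕ) = (v : ℕ) + 1) :
    colRR K m n b e ⟨j, v⟩ = genT K m n b (colRR K m n b e ⟨j, v'⟩) := by
  funext x
  obtain ⟨i, u⟩ := x
  show genRR K m n b e ⟨i, u⟩ ⟨j, v⟩ = _
  show _ = if h : (u : ℕ) + 1 < b (i.1 + 1) then genRR K m n b e ⟨i, ⟨(u:ℕ)+1, h⟩⟩ ⟨j, v'⟩ else 0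
  have hu : (u : ℕ) < b (i.1 + 1) := u.2
  have hv'e : (v' : ℕ) < e (j.1 + 1) := v'.2
  have hg1 : min (b (i.1 + 1)) (e (j.1 + 1)) ≤ b (i.1 + 1) := min_le_left _ _
  have hg2 : min (b (i.1 + 1)) (e (j.1 + 1)) ≤ e (j.1 + 1) := min_le_right _ _
  have hgpos : 1 ≤ min (b (i.1 + 1)) (e (j.1 + 1)) := by omega
  by_cases h : (u : ℕ) + 1 < b (i.1 + 1)
  · rw [dif_pos h]
    unfold genRR
    simp only
    by_cases hc : (e (j.1 + 1) - min (b (i.1 + 1)) (e (j.1 + 1))) + (u : ℕ) ≤ (v : ℕ)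
    · rw [if_pos hc, if_pos (by simpa using by omega)]
      congr 2
      simp
      omega
    · rw [if_neg hc, if_neg (by simpa using by omega)]
  · rw [dif_neg h]
    unfold genRR
    simp only
    rw [if_neg (by omega)]
lemma colRR_bot (j : Fin n) (v : Fin (e (j.1 + 1))) (hv : (v : ℕ) = 0) :
    genT K m n b (colRR K m n b e ⟨j, v⟩) = 0 := by
  funext x
  obtain ⟨i, u⟩ := x
  show (if h : (u : ℕ) + 1 < b (i.1 + 1)
      then genRR K m n b e ⟨i, ⟨(u : ℕ) + 1, h⟩⟩ ⟨j, v⟩ else 0) = 0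
  by_cases h : (u : ℕ) + 1 < b (i.1 + 1)
  · rw [dif_pos h]
    unfold genRR
    simp only
    rw [if_neg (by simp; omega)]
  · rw [dif_neg h]

lemma colRR_nilpotent (j : Fin n) (v : Fin (e (j.1 + 1))) :
    ((genT K m n b) ^ ((v : ℕ) + 1)) (colRR K m n b e ⟨j, v⟩) = 0 := by
  suffices h : ∀ k (v : Fin (e (j.1 + 1))), (v : ℕ) = k →
      ((genT K m n b) ^ (k + 1)) (colRR K m n b e ⟨j, v⟩) = 0 from h _ v rfl
  intro k
  induction k with
  | zero =>
    intro v hk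
    rw [pow_one]
    exact colRR_bot K m n b e j v hk
  | succ k ih =>
    intro v hk
    have hkv : (k : ℕ) < e (j.1 + 1) := by have := v.2; omega
    have hshift := colRR_shift K m n b e j ⟨k, hkv⟩ v (by simp [hk])
    have : ((genT K m n b) ^ (k + 1 + 1)) (colRR K m n b e ⟨j, v⟩)
        = ((genT K m n b) ^ (k + 1)) (genT K m n b (colRR K m n b e ⟨j, v⟩)) := by
      rw [pow_succ, Module.End.mul_apply]
    rw [this, ← hshift, ih ⟨k, hkv⟩ rfl]

/-- The span of the `s`-fold shifts of the columns. -/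
noncomputable def WRR (s : ℕ) : Submodule (RRField K m n) (RowTy m b → RRField K m n) :=
  Submodule.span _ (Set.range fun y : ColTy n e => ((genT K m n b) ^ s) (colRR K m n b e y))

lemma WRR_succ (s : ℕ) :
    WRR K m n b e (s + 1) = Submodule.map (genT K m n b) (WRR K m n b e s) := by
  have hfun : (fun y : ColTy n e => ((genT K m n b) ^ (s+1)) (colRR K m n b e y))
      = (⇑(genT K m n b) ∘ fun y : ColTy n e => ((genT K m n b) ^ s) (colRR K m n b e y)) := by
    funext y
    show ((genT K m n b) ^ (s+1)) (colRR K m n b e y)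
        = genT K m n b (((genT K m n b) ^ s) (colRR K m n b e y))
    rw [pow_succ', Module.End.mul_apply]
  unfold WRR
  rw [Submodule.map_span, ← Set.range_comp, hfun]

lemma WRR_vanish (s : ℕ) (w : RowTy m b → RRField K m n) (hw : w ∈ WRR K m n b e s)
    (x : RowTy m b) (hx : b (x.1.1 + 1) ≤ (x.2 : ℕ) + s) : w x = 0 := by
  induction hw using Submodule.span_induction with
  | mem w hw =>
    obtain ⟨y, rfl⟩ := hw
    show ((genT K m n b ^ s) (colRR K m n b e y)) x = 0
    rw [genT_pow_apply, dif_neg (by omega)]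
  | zero => rfl
  | add u v hu hv ihu ihv => show u x + v x = 0; rw [ihu, ihv, add_zero]
  | smul c u hu ihu => show c * u x = 0; rw [ihu, mul_zero]

lemma ker_vanish (w : RowTy m b → RRField K m n) (hw : w ∈ LinearMap.ker (genT K m n b))
    (x : RowTy m b) (hx : (x.2 : ℕ) ≠ 0) : w x = 0 := by
  obtain ⟨i, u⟩ := x
  have hu2 := u.2
  have hx' : (u : ℕ) ≠ 0 := hx
  have h1 : ((u : ℕ) - 1) + 1 < b (i.1 + 1) := by omega
  have := congrFun (LinearMap.mem_ker.mp hw) ⟨i, ⟨(u : ℕ) - 1, by omega⟩⟩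
  show w ⟨i, u⟩ = 0
  rw [show (0 : RowTy m b → RRField K m n) ⟨i, ⟨(u : ℕ) - 1, by omega⟩⟩ = 0 from rfl] at this
  rw [show genT K m n b w ⟨i, ⟨(u : ℕ) - 1, by omega⟩⟩
      = if h : ((u : ℕ) - 1) + 1 < b (i.1 + 1) then w ⟨i, ⟨((u : ℕ) - 1) + 1, h⟩⟩ else 0
      from rfl, dif_pos h1] at this
  rw [show (⟨i, u⟩ : RowTy m b) = ⟨i, ⟨((u : ℕ) - 1) + 1, h1⟩⟩ from
    Sigma.ext rfl (heq_of_eq (Fin.ext (by simp; omega)))]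
  exact this

/-- Extension-by-zero linear map from coordinates in a finset. -/
noncomputable def extZero (S : Finset (RowTy m b)) :
    (({x // x ∈ S}) → RRField K m n) →ₗ[RRField K m n] (RowTy m b → RRField K m n) where
  toFun f x := if h : x ∈ S then f ⟨x, h⟩ else 0
  map_add' u v := by
    funext x
    by_cases h : x ∈ S <;> simp [h]
  map_smul' c u := by
    funext x
    by_cases h : x ∈ S <;> simp [h]

instance fdRow : Module.Finite (RRField K m n) (RowTy m b → RRField K m n) :=
  Module.Finite.pi

lemma finrank_W_le_r (s : ℕ) :
    Module.finrank (RRField K m n) (WRR K m n b e s)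
      ≤ (Finset.univ.filter (fun i : Fin m => s < b (i.1 + 1))).card
        + Module.finrank (RRField K m n) (WRR K m n b e (s + 1)) := by
  classical
  have hrn := LinearMap.finrank_range_add_finrank_ker
    ((genT K m n b).domRestrict (WRR K m n b e s))
  have hrange : Module.finrank (RRField K m n)
      (LinearMap.range ((genT K m n b).domRestrict (WRR K m n b e s)))
      = Module.finrank (RRField K m n) (WRR K m n b e (s + 1)) := by
    rw [LinearMap.range_domRestrict, ← WRR_succ]
  have hker0 : Submodule.map (WRR K m n b e s).subtype
      (LinearMap.ker ((genT K m n b).domRestrict (WRR K m n b e s)))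
      = WRR K m n b e s ⊓ LinearMap.ker (genT K m n b) := by
    rw [LinearMap.ker_domRestrict, Submodule.map_comap_subtype]
  have hker : Module.finrank (RRField K m n)
      (LinearMap.ker ((genT K m n b).domRestrict (WRR K m n b e s)))
      = Module.finrank (RRField K m n)
        (WRR K m n b e s ⊓ LinearMap.ker (genT K m n b) :
          Submodule (RRField K m n) (RowTy m b → RRField K m n)) := by
    rw [← Submodule.finrank_map_subtype_eq (WRR K m n b e s), hker0]
  set Ss : Finset (RowTy m b) :=
    Finset.univ.filter (fun x => (x.2 : ℕ) = 0 ∧ s < b (x.1.1 + 1)) with hSs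
  have hsub : WRR K m n b e s ⊓ LinearMap.ker (genT K m n b)
      ≤ LinearMap.range (extZero K m n b Ss) := by
    rintro w ⟨hw1, hw2⟩
    refine ⟨fun z => w z.1, ?_⟩
    funext x
    show (if h : x ∈ Ss then w x else 0) = w x
    by_cases h : x ∈ Ss
    · rw [dif_pos h]
    · rw [dif_neg h]
      rw [hSs, Finset.mem_filter] at h
      push_neg at h
      by_cases h0 : (x.2 : ℕ) = 0
      · have hb := h (Finset.mem_univ _) h0
        exact (WRR_vanish K m n b e s w hw1 x (by omega)).symm
      · exact (ker_vanish K m n b w hw2 x h0).symm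
  have hcard : Module.finrank (RRField K m n)
      (WRR K m n b e s ⊓ LinearMap.ker (genT K m n b) :
        Submodule (RRField K m n) (RowTy m b → RRField K m n)) ≤ Ss.card := by
    refine (Submodule.finrank_mono hsub).trans ?_
    refine (LinearMap.finrank_range_le _).trans ?_
    rw [Module.finrank_pi]
    exact (Fintype.card_coe Ss).le
  have hbij : Ss.card = (Finset.univ.filter (fun i : Fin m => s < b (i.1 + 1))).card := by
    apply Finset.card_bij (fun x _ => x.1)
    · intro x hx
      rw [hSs, Finset.mem_filter] at hx
      rw [Finset.mem_filter]
      exact ⟨Finset.mem_univ _, hx.2.2⟩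
    · intro x hx x' hx' hh
      rw [hSs, Finset.mem_filter] at hx hx'
      obtain ⟨i, u⟩ := x
      obtain ⟨i', u'⟩ := x'
      simp only at hh
      subst hh
      exact Sigma.ext rfl (heq_of_eq (Fin.ext (by
        have := hx.2.1
        have := hx'.2.1
        simp_all)))
    · intro i hi
      rw [Finset.mem_filter] at hi
      refine ⟨⟨i, ⟨0, by omega⟩⟩, ?_, rfl⟩
      rw [hSs, Finset.mem_filter]
      exact ⟨Finset.mem_univ _, rfl, hi.2⟩
  omega

lemma finrank_W_le_c (s : ℕ) :
    Module.finrank (RRField K m n) (WRR K m n b e s)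
      ≤ (Finset.univ.filter (fun j : Fin n => s < e (j.1 + 1))).card
        + Module.finrank (RRField K m n) (WRR K m n b e (s + 1)) := by
  classical
  set Vs : Submodule (RRField K m n) (RowTy m b → RRField K m n) :=
    Submodule.span _ (Set.range fun j' : {j : Fin n // s < e (j.1 + 1)} =>
      ((genT K m n b) ^ s) (colRR K m n b e
        ⟨j'.1, ⟨e (j'.1.1 + 1) - 1, by have := j'.2; omega⟩⟩)) with hVs
  have hle : WRR K m n b e s ≤ Vs ⊔ WRR K m n b e (s + 1) := by
    apply Submodule.span_le.2
    rintro _ ⟨⟨j, v⟩, rfl⟩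
    by_cases hv : (v : ℕ) + 1 < e (j.1 + 1)
    · apply Submodule.mem_sup_right
      apply Submodule.subset_span
      refine ⟨⟨j, ⟨(v : ℕ) + 1, hv⟩⟩, ?_⟩
      show ((genT K m n b) ^ (s + 1)) (colRR K m n b e ⟨j, ⟨(v : ℕ) + 1, hv⟩⟩)
          = ((genT K m n b) ^ s) (colRR K m n b e ⟨j, v⟩)
      rw [pow_succ, Module.End.mul_apply,
        ← colRR_shift K m n b e j v ⟨(v : ℕ) + 1, hv⟩ (by simp)]
    · by_cases hs : s < e (j.1 + 1)
      · apply Submodule.mem_sup_left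
        apply Submodule.subset_span
        refine ⟨⟨j, hs⟩, ?_⟩
        show ((genT K m n b) ^ s) (colRR K m n b e ⟨j, ⟨e (j.1 + 1) - 1, by omega⟩⟩)
            = ((genT K m n b) ^ s) (colRR K m n b e ⟨j, v⟩)
        refine congrArg _ (congrArg _ (Sigma.ext rfl (heq_of_eq (Fin.ext ?_))))
        have := v.2
        simp
        omega
      · have : ((genT K m n b) ^ s) (colRR K m n b e ⟨j, v⟩) = 0 := by
          have hs' : s = (s - ((v : ℕ) + 1)) + ((v : ℕ) + 1) := by have := v.2; omega
          rw [hs', pow_add, Module.End.mul_apply, colRR_nilpotent, map_zero]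
        show ((genT K m n b) ^ s) (colRR K m n b e ⟨j, v⟩)
            ∈ Vs ⊔ WRR K m n b e (s + 1)
        rw [this]
        exact Submodule.zero_mem _
  have h1 : Module.finrank (RRField K m n) (WRR K m n b e s)
      ≤ Module.finrank (RRField K m n) (Vs ⊔ WRR K m n b e (s + 1) :
          Submodule (RRField K m n) (RowTy m b → RRField K m n)) :=
    Submodule.finrank_mono hle
  have h2 := Submodule.finrank_add_le_finrank_add_finrank Vs (WRR K m n b e (s + 1))
  have h3 : Module.finrank (RRField K m n) Vs
      ≤ (Finset.univ.filter (fun j : Fin n => s < e (j.1 + 1))).card := by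
    refine (finrank_range_le_card _).trans ?_
    rw [Fintype.card_subtype]
  omega

lemma finrank_W_step (s : ℕ) :
    Module.finrank (RRField K m n) (WRR K m n b e s)
      ≤ min ((Finset.univ.filter (fun i : Fin m => s < b (i.1 + 1))).card)
            ((Finset.univ.filter (fun j : Fin n => s < e (j.1 + 1))).card)
        + Module.finrank (RRField K m n) (WRR K m n b e (s + 1)) := by
  have h1 := finrank_W_le_r K m n b e s
  have h2 := finrank_W_le_c K m n b e s
  omega

lemma WRR_all_bot (hE : ∀ j : Fin n, e (j.1 + 1) ≤ e 1) :
    WRR K m n b e (e 1) = ⊥ := by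
  rw [WRR, Submodule.span_eq_bot]
  rintro _ ⟨⟨j, v⟩, rfl⟩
  have hv : (v : ℕ) + 1 ≤ e 1 := le_trans v.2 (hE j)
  have hs' : e 1 = (e 1 - ((v : ℕ) + 1)) + ((v : ℕ) + 1) := by omega
  show ((genT K m n b) ^ (e 1)) (colRR K m n b e ⟨j, v⟩) = 0
  rw [hs', pow_add, Module.End.mul_apply, colRR_nilpotent, map_zero]

lemma finrank_W_chain (d : ℕ) : ∀ s : ℕ,
    Module.finrank (RRField K m n) (WRR K m n b e s)
      ≤ (∑ u ∈ Finset.Ico s (s + d),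
          min ((Finset.univ.filter (fun i : Fin m => u < b (i.1 + 1))).card)
              ((Finset.univ.filter (fun j : Fin n => u < e (j.1 + 1))).card))
        + Module.finrank (RRField K m n) (WRR K m n b e (s + d)) := by
  induction d with
  | zero => intro s; simp
  | succ d ih =>
    intro s
    have h1 := finrank_W_step K m n b e s
    have h2 := ih (s + 1)
    have hsum : ∑ u ∈ Finset.Ico s (s + (d + 1)),
          min ((Finset.univ.filter (fun i : Fin m => u < b (i.1 + 1))).card)
              ((Finset.univ.filter (fun j : Fin n => u < e (j.1 + 1))).card)
        = min ((Finset.univ.filter (fun i : Fin m => s < b (i.1 + 1))).card)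
              ((Finset.univ.filter (fun j : Fin n => s < e (j.1 + 1))).card)
          + ∑ u ∈ Finset.Ico (s + 1) (s + (d + 1)),
          min ((Finset.univ.filter (fun i : Fin m => u < b (i.1 + 1))).card)
              ((Finset.univ.filter (fun j : Fin n => u < e (j.1 + 1))).card) := by
      exact Finset.sum_eq_sum_Ico_succ_bot (by omega) _
    rw [show s + 1 + d = s + (d + 1) by omega] at h2
    omega

lemma rank_eq_finrank_W0 :
    (genRR K m n b e).rank = Module.finrank (RRField K m n) (WRR K m n b e 0) := by
  rw [Matrix.rank_eq_finrank_span_cols, WRR]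
  congr 2

lemma rank_genRR_le
    (hb_mono : ∀ i j, 1 ≤ i → i ≤ j → j ≤ m → b j ≤ b i)
    (he_mono : ∀ i j, 1 ≤ i → i ≤ j → j ≤ n → e j ≤ e i) :
    (genRR K m n b e).rank ≤ ∑ i ∈ Finset.Icc 1 (min m n), min (b i) (e i) := by
  have hE : ∀ j : Fin n, e (j.1 + 1) ≤ e 1 := fun j =>
    he_mono 1 (j.1 + 1) le_rfl (by omega) (by have := j.2; omega)
  have hchain := finrank_W_chain K m n b e (e 1) 0
  rw [zero_add, WRR_all_bot K m n b e hE] at hchain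
  rw [finrank_bot] at hchain
  rw [rank_eq_finrank_W0]
  refine hchain.trans (le_of_eq ?_)
  rw [add_zero, ← Finset.range_eq_Ico]
  have h1 : ∀ u : ℕ, min ((Finset.univ.filter (fun i : Fin m => u < b (i.1 + 1))).card)
        ((Finset.univ.filter (fun j : Fin n => u < e (j.1 + 1))).card)
      = min (((Finset.Icc 1 m).filter (fun i => u < b i)).card)
            (((Finset.Icc 1 n).filter (fun i => u < e i)).card) := by
    intro u
    rw [card_fin_filter m b u, card_fin_filter n e u]
  simp only [h1]
  exact comb_identity m n b e hb_mono he_mono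

end Aux2

abbrev LowTy (m n : ℕ) (b e : ℕ → ℕ) :=
  Σ k : Fin (min m n), Fin (min (b (k.1 + 1)) (e (k.1 + 1)))

def lowRow (m n : ℕ) (b e : ℕ → ℕ) : LowTy m n b e → RowTy m b := fun x =>
  ⟨⟨x.1.1, by have := x.1.2; omega⟩,
   ⟨x.2.1, by
      show x.2.1 < b (x.1.1 + 1)
      have := x.2.2
      have h := min_le_left (b (x.1.1 + 1)) (e (x.1.1 + 1))
      omega⟩⟩

def lowCol (m n : ℕ) (b e : ℕ → ℕ) : LowTy m n b e → ColTy n e := fun x =>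
  ⟨⟨x.1.1, by have := x.1.2; omega⟩,
   ⟨e (x.1.1 + 1) - min (b (x.1.1 + 1)) (e (x.1.1 + 1)) + x.2.1, by
      show e (x.1.1 + 1) - min (b (x.1.1 + 1)) (e (x.1.1 + 1)) + x.2.1 < e (x.1.1 + 1)
      have := x.2.2
      have h := min_le_right (b (x.1.1 + 1)) (e (x.1.1 + 1))
      omega⟩⟩

noncomputable def lowPoly (K : Type*) [Field K] (m n : ℕ) (b e : ℕ → ℕ) :
    Matrix (LowTy m n b e) (LowTy m n b e) (MvPolynomial ((Fin m × Fin n) × ℕ) K) :=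
  fun x y =>
    if (e ((lowCol m n b e y).1.1 + 1)
          - min (b ((lowRow m n b e x).1.1 + 1)) (e ((lowCol m n b e y).1.1 + 1)))
        + ((lowRow m n b e x).2 : ℕ) ≤ ((lowCol m n b e y).2 : ℕ) then
      MvPolynomial.X (((lowRow m n b e x).1, (lowCol m n b e y).1),
        (e ((lowCol m n b e y).1.1 + 1) - 1) + ((lowRow m n b e x).2 : ℕ)
          - ((lowCol m n b e y).2 : ℕ))
    else 0

section Low

variable (K : Type*) [Field K] (m n : ℕ) (b e : ℕ → ℕ)

lemma genRR_submatrix :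
    (genRR K m n b e).submatrix (lowRow m n b e) (lowCol m n b e)
      = (lowPoly K m n b e).map
          (algebraMap (MvPolynomial ((Fin m × Fin n) × ℕ) K) (RRField K m n)) := by
  funext x y
  rw [Matrix.submatrix_apply, Matrix.map_apply]
  unfold genRR lowPoly
  split_ifs with h
  · rfl
  · exact (map_zero _).symm

/-- The specialization sending the lowest corner diagonal variables to 1. -/
noncomputable def lowPt : ((Fin m × Fin n) × ℕ) → K := fun v =>
  if (v.1.1 : ℕ) = (v.1.2 : ℕ) ∧ v.2 + 1 = min (b ((v.1.1 : ℕ) + 1)) (e ((v.1.1 : ℕ) + 1))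
  then 1 else 0

lemma lowPoly_eval :
    (lowPoly K m n b e).map (MvPolynomial.eval (lowPt K m n b e))
      = (1 : Matrix (LowTy m n b e) (LowTy m n b e) K) := by
  funext x y
  obtain ⟨k, u⟩ := x
  obtain ⟨l, v⟩ := y
  rw [Matrix.map_apply]
  by_cases hkl : (k : ℕ) = (l : ℕ)
  · have hkleq : k = l := Fin.ext hkl
    subst hkleq
    have hble := min_le_left (b ((k : ℕ) + 1)) (e ((k : ℕ) + 1))
    have hele := min_le_right (b ((k : ℕ) + 1)) (e ((k : ℕ) + 1))
    have hu := u.2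
    have hv := v.2
    rw [Matrix.one_apply]
    have hsig : ((⟨k, u⟩ : LowTy m n b e) = ⟨k, v⟩) = (u = v) := by
      simp
    simp only [hsig]
    unfold lowPoly lowRow lowCol lowPt
    dsimp only [Fin.val_mk]
    by_cases hc : (u : ℕ) ≤ (v : ℕ)
    · rw [if_pos (by omega)]
      rw [MvPolynomial.eval_X]
      dsimp only
      by_cases huv : u = v
      · subst huv
        rw [if_pos ⟨rfl, by omega⟩, if_pos rfl]
      · rw [if_neg (by
          rintro ⟨-, h2⟩
          exact huv (Fin.ext (by omega))), if_neg huv]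
    · rw [if_neg (by omega), map_zero,
        if_neg (fun h => hc (le_of_eq (congrArg Fin.val h)))]
  · have hne : (⟨k, u⟩ : LowTy m n b e) ≠ ⟨l, v⟩ := by
      intro h
      apply hkl
      have h1 : k = l := congrArg Sigma.fst h
      exact congrArg Fin.val h1
    rw [Matrix.one_apply_ne hne]
    unfold lowPoly lowRow lowCol lowPt
    dsimp only [Fin.val_mk]
    split_ifs with h
    · rw [MvPolynomial.eval_X]
      dsimp only
      rw [if_neg (by rintro ⟨h1, -⟩; exact hkl h1)]
    · exact map_zero _

lemma lowPoly_det_ne_zero : (lowPoly K m n b e).det ≠ 0 := by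
  intro h
  have h2 : ((lowPoly K m n b e).map (MvPolynomial.eval (lowPt K m n b e))).det
      = (0 : K) := by
    rw [← RingHom.mapMatrix_apply, ← RingHom.map_det, h, map_zero]
  rw [lowPoly_eval, Matrix.det_one] at h2
  exact one_ne_zero h2

lemma low_submatrix_det_ne_zero :
    ((genRR K m n b e).submatrix (lowRow m n b e) (lowCol m n b e)).det ≠ 0 := by
  rw [genRR_submatrix, ← RingHom.mapMatrix_apply, ← RingHom.map_det]
  intro h
  apply lowPoly_det_ne_zero K m n b e
  have hinj : Function.Injective
      (algebraMap (MvPolynomial ((Fin m × Fin n) × ℕ) K) (RRField K m n)) :=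
    IsFractionRing.injective _ _
  apply hinj
  rw [h, map_zero]

lemma sum_range_shift (N : ℕ) (f : ℕ → ℕ) :
    ∑ i ∈ Finset.range N, f (i + 1) = ∑ i ∈ Finset.Icc 1 N, f i := by
  apply Finset.sum_bij (fun i _ => i + 1)
  · intro a ha
    rw [Finset.mem_range] at ha
    rw [Finset.mem_Icc]
    omega
  · intro a _ a' _ h
    omega
  · intro j hj
    rw [Finset.mem_Icc] at hj
    refine ⟨j - 1, by rw [Finset.mem_range]; omega, by omega⟩
  · intro a _
    rfl

lemma rank_genRR_ge :
    ∑ i ∈ Finset.Icc 1 (min m n), min (b i) (e i) ≤ (genRR K m n b e).rank := by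
  classical
  have hdet := low_submatrix_det_ne_zero K m n b e
  have hunit : IsUnit ((genRR K m n b e).submatrix (lowRow m n b e) (lowCol m n b e)) :=
    (Matrix.isUnit_iff_isUnit_det _).mpr (isUnit_iff_ne_zero.mpr hdet)
  have hrank := Matrix.rank_of_isUnit _ hunit
  have hle : ((genRR K m n b e).submatrix (lowRow m n b e) (lowCol m n b e)).rank
      ≤ (genRR K m n b e).rank := by
    rw [submatrix_eq_one_mul_one (genRR K m n b e) (lowRow m n b e) (lowCol m n b e)]
    exact (Matrix.rank_mul_le_left _ _).trans (Matrix.rank_mul_le_right _ _)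
  have hcard : Fintype.card (LowTy m n b e)
      = ∑ i ∈ Finset.Icc 1 (min m n), min (b i) (e i) := by
    rw [Fintype.card_sigma]
    simp only [Fintype.card_fin]
    rw [Fin.sum_univ_eq_sum_range (fun k => min (b (k + 1)) (e (k + 1))) (min m n)]
    exact sum_range_shift (min m n) (fun i => min (b i) (e i))
  rw [← hcard]
  rw [hrank] at hle
  exact hle

end Low

/-- Proposition 10, one point: the rank of the generic regular-to-regular
homomorphism matrix is `Σ_{i=1}^{min(m,n)} min (b i) (e i)`, for
`b 1 ≥ ⋯ ≥ b m ≥ 1` and `e 1 ≥ ⋯ ≥ e n ≥ 1`. -/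
theorem rank_genRR (K : Type*) [Field K] (m n : ℕ) (b e : ℕ → ℕ)
    (hb_pos : ∀ j, 1 ≤ j → j ≤ m → 1 ≤ b j)
    (hb_mono : ∀ i j, 1 ≤ i → i ≤ j → j ≤ m → b j ≤ b i)
    (he_pos : ∀ j, 1 ≤ j → j ≤ n → 1 ≤ e j)
    (he_mono : ∀ i j, 1 ≤ i → i ≤ j → j ≤ n → e j ≤ e i) :
    (genRR K m n b e).rank = ∑ i ∈ Finset.Icc 1 (min m n), min (b i) (e i) := by
  exact le_antisymm (rank_genRR_le K m n b e hb_mono he_mono) (rank_genRR_ge K m n b e)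
end

section
/- Let M^R = ⊕_{p ∈ ℙ¹(K)} ⊕_{i=1}^{m^p} R_{p,b^p_i} and N^R = ⊕_{p ∈ ℙ¹(K)} ⊕_{j=1}^{n^p} R_{p,e^p_j} be regular Kronecker representations over an algebraically closed field K, with b^p_1 ≥ ... ≥ b^p_{m^p} and e^p_1 ≥ ... ≥ e^p_{n^p} for each p. Then N^R is a subrepresentation of M^R if and only if for every p ∈ ℙ¹(K): m^p ≥ n^p and b^p_i ≥ e^p_i for all 1 ≤ i ≤ n^p. -/
open Matrix

/-- The map `α` of the regular Kronecker representation
`⊕_{k} ⊕_{i=1}^{m k} R_{pts k, b k i}`, where `pts k ∈ ℙ¹(K) = Option K`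
(`none` is the point `∞`): blockwise `I` for finite points and the nilpotent
Jordan block `J` for `∞`. -/
def RsumA (K : Type*) [Field K] (s : ℕ) (pts : Fin s → Option K)
    (m : Fin s → ℕ) (b : (k : Fin s) → ℕ → ℕ) :
    Matrix (Σ k : Fin s, Σ i : Fin (m k), Fin (b k (i.1 + 1)))
      (Σ k : Fin s, Σ i : Fin (m k), Fin (b k (i.1 + 1))) K :=
  fun x y =>
    if x.1 = y.1 ∧ (x.2.1 : ℕ) = (y.2.1 : ℕ) then
      (match pts x.1 with
        | some _ => if (x.2.2 : ℕ) = (y.2.2 : ℕ) then 1 else 0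
        | none => if (y.2.2 : ℕ) = (x.2.2 : ℕ) + 1 then 1 else 0)
    else 0

/-- The map `β` of `⊕_{k} ⊕_{i} R_{pts k, b k i}`: blockwise `p·I + J` for the finite
point `p` and `I` for `∞`. -/
def RsumB (K : Type*) [Field K] (s : ℕ) (pts : Fin s → Option K)
    (m : Fin s → ℕ) (b : (k : Fin s) → ℕ → ℕ) :
    Matrix (Σ k : Fin s, Σ i : Fin (m k), Fin (b k (i.1 + 1)))
      (Σ k : Fin s, Σ i : Fin (m k), Fin (b k (i.1 + 1))) K :=
  fun x y =>
    if x.1 = y.1 ∧ (x.2.1 : ℕ) = (y.2.1 : ℕ) then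
      (match pts x.1 with
        | some p => (if (x.2.2 : ℕ) = (y.2.2 : ℕ) then p else 0) +
            (if (y.2.2 : ℕ) = (x.2.2 : ℕ) + 1 then 1 else 0)
        | none => if (x.2.2 : ℕ) = (y.2.2 : ℕ) then 1 else 0)
    else 0

/-!
Fix `q ∈ ℙ¹(K)` and let `c` be the element of the pencil spanned by `α, β` that vanishes at `q`
(`β - z • α` for `q = z`, `α` for `q = ∞`), and `d = β - z' • α` for some `z'` different from all
the given points. On every `R_{p,k}` the map `d` is invertible, and so is `c` unless `p = q`, where
`c = J`. Hence `dim (ker c ⊓ range cᵗ)` is the number of blocks at `q` of size `> t`: the length of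
column `t + 1` of the Young diagram of the block sizes at `q`. A monomorphism `(ψ, φ)` intertwines
the endomorphisms `d⁻¹ c` of the two sides through `φ`, and `d⁻¹ c` has the same `ker ⊓ range (·)ᵗ`
as `c`, so these column lengths can only grow from `N^R` to `M^R`, which is containment of the
Young diagrams. Conversely, the blockwise inclusion of coordinates is then a monomorphism.
-/

namespace RegularKronecker

open Module LinearMap Finset

theorem exists_forall_ne_some {α ι : Type*} [Infinite α] [Finite ι] (f : ι → Option α) :
    ∃ a : α, ∀ i, f i ≠ some a := by
  obtain ⟨a, ha⟩ :=
    ((Set.finite_range f).preimage (Option.some_injective α).injOn).exists_notMem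
  exact ⟨a, fun i hi => ha ⟨i, hi⟩⟩

variable {K : Type*} [Field K]

section KerInfRange

variable {V W : Type*} [AddCommGroup V] [Module K V] [AddCommGroup W] [Module K W]

theorem finrank_ker_inf_range_pow_le_of_injective [FiniteDimensional K W] {f : Module.End K V}
    {g : Module.End K W} {Φ : V →ₗ[K] W} (hΦ : Function.Injective Φ) (h : g ∘ₗ Φ = Φ ∘ₗ f)
    (i : ℕ) :
    finrank K ↥(ker f ⊓ range (f ^ i)) ≤ finrank K ↥(ker g ⊓ range (g ^ i)) := by
  refine (Submodule.equivMapOfInjective Φ hΦ _).finrank_eq.trans_le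
    (Submodule.finrank_mono ?_)
  rintro _ ⟨v, ⟨hv, w, rfl⟩, rfl⟩
  refine ⟨?_, Φ w, ?_⟩
  · rw [SetLike.mem_coe, mem_ker] at hv ⊢
    rw [← LinearMap.comp_apply, h, LinearMap.comp_apply, hv, map_zero]
  · rw [← LinearMap.comp_apply, Module.End.commute_pow_left_of_commute h, LinearMap.comp_apply]

theorem ker_inf_range_pow_units_inv_mul {f : Module.End K V} (u : (Module.End K V)ˣ)
    (h : Commute f u) (i : ℕ) :
    ker ((↑u⁻¹ : Module.End K V) * f) ⊓ range (((↑u⁻¹ : Module.End K V) * f) ^ i) =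
      ker f ⊓ range (f ^ i) := by
  have hinj : ker (↑u⁻¹ : Module.End K V) = ⊥ :=
    ker_eq_bot.mpr ((Module.End.isUnit_iff _).mp (Units.isUnit _)).1
  have hsurj : range (↑(u⁻¹ ^ i) : Module.End K V) = ⊤ :=
    range_eq_top.mpr ((Module.End.isUnit_iff _).mp (Units.isUnit _)).2
  -- `(u⁻¹ * f) ^ i = f ^ i * u⁻¹ ^ i`, and composing with a bijection on the right keeps the range
  rw [h.units_inv_right.symm.mul_pow i, ← (h.units_inv_right.pow_pow i i).eq,
    ← Units.val_pow_eq_pow_val, Module.End.mul_eq_comp, Module.End.mul_eq_comp,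
    ker_comp_of_ker_eq_bot _ hinj, range_comp_of_range_eq_top _ hsurj]

theorem finrank_ker_inf_range_pow_le [FiniteDimensional K W] {cV : Module.End K V}
    {cW : Module.End K W} (dV : (Module.End K V)ˣ) (dW : (Module.End K W)ˣ)
    (hV : Commute cV dV) (hW : Commute cW dW) {Φ Ψ : V →ₗ[K] W} (hΦ : Function.Injective Φ)
    (hc : cW ∘ₗ Φ = Ψ ∘ₗ cV) (hd : ↑dW ∘ₗ Φ = Ψ ∘ₗ ↑dV) (i : ℕ) :
    finrank K ↥(ker cV ⊓ range (cV ^ i)) ≤ finrank K ↥(ker cW ⊓ range (cW ^ i)) := by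
  rw [← ker_inf_range_pow_units_inv_mul dV hV, ← ker_inf_range_pow_units_inv_mul dW hW]
  refine finrank_ker_inf_range_pow_le_of_injective hΦ (LinearMap.ext fun v => ?_) i
  have hΨ : Ψ (cV v) = (dW : Module.End K W) (Φ ((↑dV⁻¹ : Module.End K V) (cV v))) := by
    rw [← LinearMap.comp_apply (↑dW : Module.End K W), hd, LinearMap.comp_apply,
      ← Module.End.mul_apply, Units.mul_inv, Module.End.one_apply]
  simp only [LinearMap.comp_apply, Module.End.mul_apply]
  rw [← LinearMap.comp_apply cW, hc, LinearMap.comp_apply, hΨ, ← Module.End.mul_apply,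
    Units.inv_mul, Module.End.one_apply]

end KerInfRange

-- `#{j ∈ range n | t < e (j + 1)}` is the length of column `t + 1` of the Young diagram of `e`.
theorem le_of_forall_card_filter_lt_le {n m : ℕ} {e b : ℕ → ℕ}
    (he_pos : ∀ i, 1 ≤ i → i ≤ n → 1 ≤ e i)
    (he_mono : ∀ i j, 1 ≤ i → i ≤ j → j ≤ n → e j ≤ e i)
    (hb_mono : ∀ i j, 1 ≤ i → i ≤ j → j ≤ m → b j ≤ b i)
    (h : ∀ t, #{j ∈ range n | t < e (j + 1)} ≤ #{j ∈ range m | t < b (j + 1)}) :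
    n ≤ m ∧ ∀ i, 1 ≤ i → i ≤ n → e i ≤ b i := by
  have hnm : n ≤ m := by
    have h0 := h 0
    rw [filter_true_of_mem (p := fun j => 0 < e (j + 1)) fun j hj =>
      he_pos (j + 1) (Nat.le_add_left 1 j) (Finset.mem_range.mp hj), card_range] at h0
    exact h0.trans ((card_filter_le _ _).trans (card_range m).le)
  refine ⟨hnm, fun i hi hin => ?_⟩
  by_contra! hlt
  have hlow : i ≤ #{j ∈ range n | b i < e (j + 1)} :=
    calc i = #(range i) := (card_range i).symm
      _ ≤ _ := card_le_card fun j hj => by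
        simp only [Finset.mem_range, mem_filter] at hj ⊢
        exact ⟨by omega, hlt.trans_le (he_mono _ _ (by omega) (by omega) hin)⟩
  have hup : #{j ∈ range m | b i < b (j + 1)} ≤ i - 1 :=
    calc _ ≤ #(range (i - 1)) := card_le_card fun j hj => by
          simp only [Finset.mem_range, mem_filter] at hj ⊢
          by_contra! hj'
          exact (hj.2.trans_le (hb_mono _ _ hi (by omega) (by omega))).false
      _ = i - 1 := card_range _
  have hcol := h (b i)
  omega

variable {s : ℕ}

-- `⟨k, i, t⟩` is slot `t` of block number `i + 1` (of size `b k (i + 1)`) at the point `pts k`.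
abbrev BlockIndex (m : Fin s → ℕ) (b : (k : Fin s) → ℕ → ℕ) :=
  Σ k : Fin s, Σ i : Fin (m k), Fin (b k (i.1 + 1))

section Blocks

variable {m : Fin s → ℕ} {b : (k : Fin s) → ℕ → ℕ}

theorem BlockIndex.eq_iff {x y : BlockIndex m b} :
    x = y ↔ x.1 = y.1 ∧ x.2.1.1 = y.2.1.1 ∧ x.2.2.1 = y.2.2.1 := by
  obtain ⟨k, j, t⟩ := x
  obtain ⟨k', j', t'⟩ := y
  constructor
  · rintro ⟨⟩
    exact ⟨rfl, rfl, rfl⟩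
  · rintro ⟨rfl, hj, ht⟩
    obtain rfl := Fin.ext hj
    obtain rfl := Fin.ext ht
    rfl

variable (K m b) in
def blockShift : Module.End K (BlockIndex m b → K) where
  toFun v x := if h : x.2.2.1 + 1 < b x.1 (x.2.1.1 + 1) then v ⟨x.1, x.2.1, ⟨_, h⟩⟩ else 0
  map_add' v w := by
    funext x
    dsimp only [Pi.add_apply]
    split_ifs <;> simp
  map_smul' c v := by
    funext x
    dsimp only [Pi.smul_apply, RingHom.id_apply]
    split_ifs <;> simp

theorem blockShift_apply (v : BlockIndex m b → K) (x : BlockIndex m b) :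
    blockShift K m b v x =
      if h : x.2.2.1 + 1 < b x.1 (x.2.1.1 + 1) then v ⟨x.1, x.2.1, ⟨_, h⟩⟩ else 0 :=
  rfl

def blockJordan (lam mu : Fin s → K) : Module.End K (BlockIndex m b → K) where
  toFun v x := lam x.1 * v x + mu x.1 * blockShift K m b v x
  map_add' v w := by
    funext x
    simp only [map_add, Pi.add_apply]
    ring
  map_smul' c v := by
    funext x
    simp only [map_smul, Pi.smul_apply, smul_eq_mul, RingHom.id_apply]
    ring

variable {lam mu : Fin s → K}

theorem blockJordan_apply (v : BlockIndex m b → K) (x : BlockIndex m b) :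
    blockJordan lam mu v x = lam x.1 * v x + mu x.1 * blockShift K m b v x :=
  rfl

theorem blockShift_blockJordan (v : BlockIndex m b → K) :
    blockShift K m b (blockJordan lam mu v) = blockJordan lam mu (blockShift K m b v) := by
  funext x
  simp only [blockShift_apply, blockJordan_apply]
  split_ifs <;> simp

theorem blockJordan_commute (lam' mu' : Fin s → K) :
    Commute (blockJordan (m := m) (b := b) lam mu) (blockJordan lam' mu') := by
  refine LinearMap.ext fun v => funext fun x => ?_
  simp only [Module.End.mul_apply, blockJordan_apply, blockShift_blockJordan]
  ring

theorem toMatrix'_blockJordan_apply (x y : BlockIndex m b) :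
    toMatrix' (blockJordan lam mu) x y =
      if x.1 = y.1 ∧ x.2.1.1 = y.2.1.1 then
        (if x.2.2.1 = y.2.2.1 then lam x.1 else 0) + (if y.2.2.1 = x.2.2.1 + 1 then mu x.1 else 0)
      else 0 := by
  obtain ⟨k, j, t⟩ := x
  obtain ⟨k', j', t'⟩ := y
  simp only [toMatrix'_apply, blockJordan_apply, blockShift_apply, Pi.single_apply,
    BlockIndex.eq_iff]
  by_cases hkj : k = k' ∧ j.1 = j'.1
  · obtain ⟨rfl, hj⟩ := hkj
    obtain rfl := Fin.ext hj
    have := t'.isLt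
    simp only [true_and, if_true]
    split_ifs <;> first | ring1 | omega
  · have hnot : ∀ P : Prop, ¬(k = k' ∧ j.1 = j'.1 ∧ P) := fun P h => hkj ⟨h.1, h.2.1⟩
    simp [hnot, hkj]

theorem blockJordan_apply_eq_zero_of_eq_zero {v : BlockIndex m b → K}
    (hv : blockJordan lam mu v = 0) (x : BlockIndex m b) (hx : lam x.1 ≠ 0) : v x = 0 := by
  have hvx := congrFun hv x
  rw [blockJordan_apply, blockShift_apply, Pi.zero_apply] at hvx
  split_ifs at hvx with h
  · have hnext := blockJordan_apply_eq_zero_of_eq_zero hv ⟨x.1, x.2.1, ⟨_, h⟩⟩ hx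
    rw [hnext, mul_zero, add_zero] at hvx
    exact (mul_eq_zero.mp hvx).resolve_left hx
  · rw [mul_zero, add_zero] at hvx
    exact (mul_eq_zero.mp hvx).resolve_left hx
termination_by b x.1 (x.2.1.1 + 1) - x.2.2.1

theorem blockJordan_injective (h : ∀ k, lam k ≠ 0) :
    Function.Injective (blockJordan (m := m) (b := b) lam mu) := by
  rw [← LinearMap.ker_eq_bot, LinearMap.ker_eq_bot']
  exact fun v hv => funext fun x => blockJordan_apply_eq_zero_of_eq_zero hv x (h x.1)

theorem blockJordan_apply_of_eq_zero {x : BlockIndex m b} (hl : lam x.1 = 0) (hm : mu x.1 = 1)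
    (v : BlockIndex m b → K) : blockJordan lam mu v x = blockShift K m b v x := by
  rw [blockJordan_apply, hl, hm, zero_mul, zero_add, one_mul]

theorem blockJordan_pow_apply {x : BlockIndex m b} (hl : lam x.1 = 0) (hm : mu x.1 = 1)
    (i : ℕ) (v : BlockIndex m b → K) :
    (blockJordan lam mu ^ i) v x =
      if h : x.2.2.1 + i < b x.1 (x.2.1.1 + 1) then v ⟨x.1, x.2.1, ⟨_, h⟩⟩ else 0 := by
  induction i generalizing x with
  | zero => simp
  | succ i ih =>
    rw [pow_succ', Module.End.mul_apply, blockJordan_apply_of_eq_zero hl hm, blockShift_apply]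
    split_ifs with h₁ h₂ h₂
    · rw [ih (x := ⟨x.1, x.2.1, ⟨_, h₁⟩⟩) hl hm, dif_pos (by dsimp only; omega)]
      congr 4
      dsimp only
      omega
    · rw [ih (x := ⟨x.1, x.2.1, ⟨_, h₁⟩⟩) hl hm, dif_neg (by dsimp only; omega)]
    · omega
    · rfl

theorem blockJordan_pow_apply_eq_zero {k₀ : Fin s} {v : BlockIndex m b → K}
    (hv : ∀ y : BlockIndex m b, y.1 ≠ k₀ → v y = 0) (i : ℕ) (x : BlockIndex m b)
    (hx : x.1 ≠ k₀) : (blockJordan lam mu ^ i) v x = 0 := by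
  induction i generalizing v with
  | zero => exact hv x hx
  | succ i ih =>
    rw [pow_succ, Module.End.mul_apply]
    refine ih (fun y hy => ?_)
    rw [blockJordan_apply, blockShift_apply, hv y hy]
    split_ifs with h
    · rw [hv ⟨y.1, y.2.1, ⟨_, h⟩⟩ hy]; ring
    · ring

variable (m b) in
def blockHeads (k₀ : Fin s) (i : ℕ) : Set (BlockIndex m b) :=
  {x | x.1 = k₀ ∧ x.2.2.1 = 0 ∧ i < b x.1 (x.2.1.1 + 1)}

theorem eq_zero_of_mem_ker_inf_range_pow {k₀ : Fin s} (hl₀ : lam k₀ = 0) (hm₀ : mu k₀ = 1)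
    (hl : ∀ k, k ≠ k₀ → lam k ≠ 0) {i : ℕ} {v : BlockIndex m b → K}
    (hv : v ∈ ker (blockJordan lam mu) ⊓ range (blockJordan lam mu ^ i)) (x : BlockIndex m b)
    (hx : x ∉ blockHeads m b k₀ i) : v x = 0 := by
  obtain ⟨hker, w, rfl⟩ := Submodule.mem_inf.mp hv
  rw [mem_ker] at hker
  simp only [blockHeads, Set.mem_ofPred_eq, not_and] at hx
  by_cases hk : x.1 = k₀
  · by_cases ht : x.2.2.1 = 0
    · rw [blockJordan_pow_apply (hk ▸ hl₀) (hk ▸ hm₀), dif_neg fun h => hx hk ht (by omega)]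
    · have hprev := congrFun hker ⟨x.1, x.2.1, ⟨x.2.2.1 - 1, by omega⟩⟩
      rw [blockJordan_apply_of_eq_zero (hk ▸ hl₀) (hk ▸ hm₀), blockShift_apply,
        dif_pos (by dsimp only; omega), Pi.zero_apply] at hprev
      convert hprev using 2
      exact BlockIndex.eq_iff.mpr ⟨rfl, rfl, by dsimp only; omega⟩
  · exact blockJordan_apply_eq_zero_of_eq_zero hker x (hl _ hk)

theorem mem_ker_inf_range_pow_of_eq_zero {k₀ : Fin s} (hl₀ : lam k₀ = 0) (hm₀ : mu k₀ = 1)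
    {i : ℕ} {v : BlockIndex m b → K} (hv : ∀ x ∉ blockHeads m b k₀ i, v x = 0) :
    v ∈ ker (blockJordan lam mu) ⊓ range (blockJordan lam mu ^ i) := by
  simp only [blockHeads, Set.mem_ofPred_eq] at hv
  refine ⟨funext fun x => ?_, ?_⟩
  · have hshift : blockShift K m b v x = 0 := by
      rw [blockShift_apply]
      split_ifs
      · exact hv _ fun h => Nat.succ_ne_zero _ h.2.1
      · rfl
    rw [blockJordan_apply, hshift, mul_zero, add_zero, Pi.zero_apply]
    by_cases hk : x.1 = k₀
    · rw [show lam x.1 = 0 from hk ▸ hl₀, zero_mul]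
    · rw [hv x fun h => hk h.1, mul_zero]
  -- the preimage under `J ^ i`: each first slot moved `i` places down its block
  refine ⟨fun y => if y.1 = k₀ ∧ y.2.2.1 = i then
    v ⟨y.1, y.2.1, ⟨0, (Nat.zero_le _).trans_lt y.2.2.isLt⟩⟩ else 0, funext fun x => ?_⟩
  by_cases hk : x.1 = k₀
  · rw [blockJordan_pow_apply (hk ▸ hl₀) (hk ▸ hm₀)]
    dsimp only
    by_cases ht : x.2.2.1 = 0
    · by_cases hi : i < b x.1 (x.2.1.1 + 1)
      · rw [dif_pos (by omega), if_pos ⟨hk, by omega⟩]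
        exact congrArg v (BlockIndex.eq_iff.mpr ⟨rfl, rfl, ht.symm⟩)
      · rw [dif_neg (by omega), hv x fun h => hi h.2.2]
    · rw [hv x fun h => ht h.2.1]
      split_ifs with h₁ h₂
      · exact absurd h₂.2 (by omega)
      · rfl
      · rfl
  · rw [blockJordan_pow_apply_eq_zero (fun y hy => if_neg fun h => hy h.1) i x hk,
      hv x fun h => hk h.1]

theorem ker_inf_range_pow_blockJordan {k₀ : Fin s} (hl₀ : lam k₀ = 0) (hm₀ : mu k₀ = 1)
    (hl : ∀ k, k ≠ k₀ → lam k ≠ 0) (i : ℕ) :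
    ker (blockJordan (m := m) (b := b) lam mu) ⊓ range (blockJordan lam mu ^ i) =
      ⨅ x ∈ (blockHeads m b k₀ i)ᶜ, ker (proj x) := by
  ext v
  simp only [Submodule.mem_iInf, Set.mem_compl_iff, mem_ker, proj_apply]
  exact ⟨eq_zero_of_mem_ker_inf_range_pow hl₀ hm₀ hl, mem_ker_inf_range_pow_of_eq_zero hl₀ hm₀⟩

theorem card_blockHeads (k₀ : Fin s) (i : ℕ) :
    Nat.card (blockHeads m b k₀ i) = #{j ∈ range (m k₀) | i < b k₀ (j + 1)} := by
  classical
  rw [Nat.card_eq_fintype_card, Fintype.card_subtype]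
  apply Finset.card_nbij (fun x => x.2.1.1)
  · rintro ⟨k, j, t⟩ hx
    simp only [Finset.mem_coe, mem_filter_univ] at hx
    obtain ⟨rfl, -, hi⟩ := hx
    simpa using And.intro j.isLt hi
  · intro x hx y hy hxy
    simp only [Finset.mem_coe, mem_filter_univ] at hx hy
    exact BlockIndex.eq_iff.mpr ⟨hx.1.trans hy.1.symm, hxy, hx.2.1.trans hy.2.1.symm⟩
  · intro j hj
    simp only [coe_filter, Finset.mem_range, Set.mem_ofPred_eq] at hj
    exact ⟨⟨k₀, ⟨j, hj.1⟩, ⟨0, (Nat.zero_le i).trans_lt hj.2⟩⟩,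
      by simpa only [Finset.mem_coe, mem_filter_univ] using ⟨rfl, rfl, hj.2⟩, rfl⟩

theorem finrank_ker_inf_range_pow_blockJordan {k₀ : Fin s} (hl₀ : lam k₀ = 0) (hm₀ : mu k₀ = 1)
    (hl : ∀ k, k ≠ k₀ → lam k ≠ 0) (i : ℕ) :
    finrank K ↥(ker (blockJordan (m := m) (b := b) lam mu) ⊓ range (blockJordan lam mu ^ i)) =
      #{j ∈ range (m k₀) | i < b k₀ (j + 1)} := by
  classical
  rw [ker_inf_range_pow_blockJordan hl₀ hm₀ hl i, ← card_blockHeads, Nat.card_eq_fintype_card,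
    (iInfKerProjEquiv K (fun _ => K) disjoint_compl_right (by simp)).finrank_eq,
    Module.finrank_fintype_fun_eq_card]

end Blocks

-- On `R_p`, the pencil element vanishing at `q` (`β - z • α` for `q = z`, `α` for `q = ∞`) is
-- `diagCoeff q p • I + shiftCoeff q p • J`.
def diagCoeff : Option K → Option K → K
  | some z, some p => p - z
  | some _, none => 1
  | none, some _ => 1
  | none, none => 0

def shiftCoeff : Option K → Option K → K
  | some _, some _ => 1
  | some z, none => -z
  | none, some _ => 0
  | none, none => 1

theorem diagCoeff_eq_zero_iff {q p : Option K} : diagCoeff q p = 0 ↔ p = q := by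
  rcases q with _ | z <;> rcases p with _ | p <;> simp [diagCoeff, sub_eq_zero]

theorem shiftCoeff_self (q : Option K) : shiftCoeff q q = 1 := by
  rcases q with _ | z <;> rfl

section Pencil

variable {m : Fin s → ℕ} {b : (k : Fin s) → ℕ → ℕ} (pts : Fin s → Option K)

def pencilAt (q : Option K) : Module.End K (BlockIndex m b → K) :=
  blockJordan (fun k => diagCoeff q (pts k)) (fun k => shiftCoeff q (pts k))

theorem toMatrix'_pencilAt_none :
    toMatrix' (pencilAt (m := m) (b := b) pts none) = RsumA K s pts m b := by
  ext x y
  rw [pencilAt, toMatrix'_blockJordan_apply, RsumA]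
  rcases pts x.1 with _ | p <;> simp [diagCoeff, shiftCoeff]

theorem toMatrix'_pencilAt_some (z : K) :
    toMatrix' (pencilAt (m := m) (b := b) pts (some z)) =
      RsumB K s pts m b - z • RsumA K s pts m b := by
  ext x y
  rw [pencilAt, toMatrix'_blockJordan_apply, Matrix.sub_apply, Matrix.smul_apply, RsumA, RsumB]
  rcases pts x.1 with _ | p <;> simp only [diagCoeff, shiftCoeff, smul_eq_mul] <;>
    split_ifs <;> ring1

theorem toMatrix'_pencilAt_some_zero :
    toMatrix' (pencilAt (m := m) (b := b) pts (some 0)) = RsumB K s pts m b := by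
  rw [toMatrix'_pencilAt_some, zero_smul, sub_zero]

theorem pencilAt_commute (q q' : Option K) :
    Commute (pencilAt (m := m) (b := b) pts q) (pencilAt pts q') :=
  blockJordan_commute _ _

theorem isUnit_pencilAt {q : Option K} (hq : ∀ k, pts k ≠ q) :
    IsUnit (pencilAt (m := m) (b := b) pts q) := by
  have hinj := blockJordan_injective (m := m) (b := b) (mu := fun k => shiftCoeff q (pts k))
    fun k => diagCoeff_eq_zero_iff.not.mpr (hq k)
  exact (Module.End.isUnit_iff _).mpr ⟨hinj, LinearMap.injective_iff_surjective.mp hinj⟩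

theorem finrank_ker_inf_range_pow_pencilAt (hpts : Function.Injective pts) (k₀ : Fin s)
    (i : ℕ) :
    finrank K ↥(ker (pencilAt (m := m) (b := b) pts (pts k₀)) ⊓
        range (pencilAt pts (pts k₀) ^ i)) = #{j ∈ range (m k₀) | i < b k₀ (j + 1)} :=
  finrank_ker_inf_range_pow_blockJordan (diagCoeff_eq_zero_iff.mpr rfl) (shiftCoeff_self _)
    (fun _ hk => diagCoeff_eq_zero_iff.not.mpr (hpts.ne hk)) i

theorem pencilAt_comp_mulVecLin {n : Fin s → ℕ} {e : (k : Fin s) → ℕ → ℕ}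
    {φ ψ : Matrix (BlockIndex m b) (BlockIndex n e) K}
    (hA : RsumA K s pts m b * φ = ψ * RsumA K s pts n e)
    (hB : RsumB K s pts m b * φ = ψ * RsumB K s pts n e) (q : Option K) :
    pencilAt pts q ∘ₗ φ.mulVecLin = ψ.mulVecLin ∘ₗ pencilAt pts q := by
  have hmat : toMatrix' (pencilAt (m := m) (b := b) pts q) * φ =
      ψ * toMatrix' (pencilAt (m := n) (b := e) pts q) := by
    rcases q with _ | z
    · rw [toMatrix'_pencilAt_none, toMatrix'_pencilAt_none, hA]
    · rw [toMatrix'_pencilAt_some, toMatrix'_pencilAt_some, Matrix.sub_mul, Matrix.mul_sub, hB,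
        Matrix.smul_mul, Matrix.mul_smul, hA]
  have hlin := congrArg Matrix.toLin' hmat
  rwa [Matrix.toLin'_mul, Matrix.toLin'_mul, Matrix.toLin'_toMatrix', Matrix.toLin'_toMatrix',
    Matrix.toLin'_apply', Matrix.toLin'_apply'] at hlin

end Pencil

section Inclusion

variable {m : Fin s → ℕ} {b : (k : Fin s) → ℕ → ℕ}
  {n : Fin s → ℕ} {e : (k : Fin s) → ℕ → ℕ}

variable (K m b n e) in
def blockInclusion : (BlockIndex n e → K) →ₗ[K] (BlockIndex m b → K) where
  toFun v x :=
    if h : x.2.1.1 < n x.1 ∧ x.2.2.1 < e x.1 (x.2.1.1 + 1) then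
      v ⟨x.1, ⟨_, h.1⟩, ⟨_, h.2⟩⟩ else 0
  map_add' v w := by
    funext x
    dsimp only [Pi.add_apply]
    split_ifs <;> simp
  map_smul' c v := by
    funext x
    dsimp only [Pi.smul_apply, RingHom.id_apply]
    split_ifs <;> simp

theorem blockInclusion_apply (v : BlockIndex n e → K) (x : BlockIndex m b) :
    blockInclusion K m b n e v x =
      if h : x.2.1.1 < n x.1 ∧ x.2.2.1 < e x.1 (x.2.1.1 + 1) then
        v ⟨x.1, ⟨_, h.1⟩, ⟨_, h.2⟩⟩ else 0 :=
  rfl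

theorem blockInclusion_injective (hnm : ∀ k, n k ≤ m k)
    (heb : ∀ k i, 1 ≤ i → i ≤ n k → e k i ≤ b k i) :
    Function.Injective (blockInclusion K m b n e) := by
  rw [← LinearMap.ker_eq_bot, LinearMap.ker_eq_bot']
  intro v hv
  funext y
  have hy := congrFun hv ⟨y.1, ⟨y.2.1.1, y.2.1.isLt.trans_le (hnm y.1)⟩,
    ⟨y.2.2.1, y.2.2.isLt.trans_le (heb y.1 _ (Nat.le_add_left 1 _) y.2.1.isLt)⟩⟩
  rwa [blockInclusion_apply, dif_pos ⟨y.2.1.isLt, y.2.2.isLt⟩] at hy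

theorem blockShift_blockInclusion (heb : ∀ k i, 1 ≤ i → i ≤ n k → e k i ≤ b k i)
    (v : BlockIndex n e → K) :
    blockShift K m b (blockInclusion K m b n e v) =
      blockInclusion K m b n e (blockShift K n e v) := by
  funext x
  simp only [blockShift_apply, blockInclusion_apply]
  have heb' : x.2.1.1 < n x.1 → e x.1 (x.2.1.1 + 1) ≤ b x.1 (x.2.1.1 + 1) :=
    heb _ _ (Nat.le_add_left 1 _)
  by_cases hb : x.2.2.1 + 1 < b x.1 (x.2.1.1 + 1)
  · rw [dif_pos hb]
    split_ifs <;> first | rfl | (exfalso; omega)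
  · rw [dif_neg hb]
    split_ifs with h₁ h₂
    · exact absurd (h₂.trans_le (heb' h₁.1)) hb
    · rfl
    · rfl

theorem blockJordan_comp_blockInclusion (heb : ∀ k i, 1 ≤ i → i ≤ n k → e k i ≤ b k i)
    (lam mu : Fin s → K) :
    blockJordan lam mu ∘ₗ blockInclusion K m b n e =
      blockInclusion K m b n e ∘ₗ blockJordan lam mu := by
  refine LinearMap.ext fun v => funext fun x => ?_
  simp only [LinearMap.comp_apply, blockJordan_apply, blockShift_blockInclusion heb,
    blockInclusion_apply]
  split_ifs <;> simp

end Inclusion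

end RegularKronecker

theorem regular_subrep_iff_general (K : Type*) [Field K] [IsAlgClosed K]
    (s : ℕ) (pts : Fin s → Option K) (hpts : Function.Injective pts)
    (m n : Fin s → ℕ) (b e : (k : Fin s) → ℕ → ℕ)
    (hb_mono : ∀ k, ∀ i j, 1 ≤ i → i ≤ j → j ≤ m k → b k j ≤ b k i)
    (he_pos : ∀ k, ∀ i, 1 ≤ i → i ≤ n k → 1 ≤ e k i)
    (he_mono : ∀ k, ∀ i j, 1 ≤ i → i ≤ j → j ≤ n k → e k j ≤ e k i) :
    (∃ (ψ : Matrix (Σ k : Fin s, Σ i : Fin (m k), Fin (b k (i.1 + 1)))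
          (Σ k : Fin s, Σ j : Fin (n k), Fin (e k (j.1 + 1))) K)
       (φ : Matrix (Σ k : Fin s, Σ i : Fin (m k), Fin (b k (i.1 + 1)))
          (Σ k : Fin s, Σ j : Fin (n k), Fin (e k (j.1 + 1))) K),
        Function.Injective ψ.mulVecLin ∧ Function.Injective φ.mulVecLin ∧
        RsumA K s pts m b * φ = ψ * RsumA K s pts n e ∧
        RsumB K s pts m b * φ = ψ * RsumB K s pts n e) ↔
    (∀ k, n k ≤ m k ∧ ∀ i, 1 ≤ i → i ≤ n k → e k i ≤ b k i) := by
  open RegularKronecker LinearMap in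
  classical
  constructor
  · rintro ⟨ψ, φ, -, hφ, hA, hB⟩ k
    obtain ⟨z, hz⟩ := exists_forall_ne_some pts
    refine le_of_forall_card_filter_lt_le (he_pos k) (he_mono k) (hb_mono k) fun t => ?_
    rw [← finrank_ker_inf_range_pow_pencilAt pts hpts,
      ← finrank_ker_inf_range_pow_pencilAt pts hpts]
    exact finrank_ker_inf_range_pow_le (isUnit_pencilAt pts hz).unit (isUnit_pencilAt pts hz).unit
      (pencilAt_commute pts _ _) (pencilAt_commute pts _ _) hφ
      (pencilAt_comp_mulVecLin pts hA hB _) (pencilAt_comp_mulVecLin pts hA hB _) t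
  · intro h
    have heb k := (h k).2
    have hinj : Function.Injective (toMatrix' (blockInclusion K m b n e)).mulVecLin := by
      rw [← Matrix.toLin'_apply', Matrix.toLin'_toMatrix']
      exact blockInclusion_injective (fun k => (h k).1) heb
    have hcomm (q : Option K) := congrArg toMatrix'
      (blockJordan_comp_blockInclusion (m := m) (b := b) heb (fun k => diagCoeff q (pts k))
        (fun k => shiftCoeff q (pts k)))
    simp only [toMatrix'_comp] at hcomm
    refine ⟨_, _, hinj, hinj, ?_, ?_⟩
    · rw [← toMatrix'_pencilAt_none, ← toMatrix'_pencilAt_none]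
      exact hcomm none
    · rw [← toMatrix'_pencilAt_some_zero, ← toMatrix'_pencilAt_some_zero]
      exact hcomm (some 0)

/-- Theorem 11: the regular Kronecker representation
`N^R = ⊕_k ⊕_{j=1}^{n k} R_{pts k, e k j}` is a subrepresentation of
`M^R = ⊕_k ⊕_{i=1}^{m k} R_{pts k, b k i}` iff for every point `k`, `m k ≥ n k`
and `b k i ≥ e k i` for `1 ≤ i ≤ n k`.  The distinct points `pts k` run over a
finite list of elements of `ℙ¹(K) = Option K`. -/
theorem regular_subrep_iff (K : Type*) [Field K] [IsAlgClosed K]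
    (s : ℕ) (pts : Fin s → Option K) (hpts : Function.Injective pts)
    (m n : Fin s → ℕ) (b e : (k : Fin s) → ℕ → ℕ)
    (hb_pos : ∀ k, ∀ i, 1 ≤ i → i ≤ m k → 1 ≤ b k i)
    (hb_mono : ∀ k, ∀ i j, 1 ≤ i → i ≤ j → j ≤ m k → b k j ≤ b k i)
    (he_pos : ∀ k, ∀ i, 1 ≤ i → i ≤ n k → 1 ≤ e k i)
    (he_mono : ∀ k, ∀ i j, 1 ≤ i → i ≤ j → j ≤ n k → e k j ≤ e k i) :
    (∃ (ψ : Matrix (Σ k : Fin s, Σ i : Fin (m k), Fin (b k (i.1 + 1)))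
          (Σ k : Fin s, Σ j : Fin (n k), Fin (e k (j.1 + 1))) K)
       (φ : Matrix (Σ k : Fin s, Σ i : Fin (m k), Fin (b k (i.1 + 1)))
          (Σ k : Fin s, Σ j : Fin (n k), Fin (e k (j.1 + 1))) K),
        Function.Injective ψ.mulVecLin ∧ Function.Injective φ.mulVecLin ∧
        RsumA K s pts m b * φ = ψ * RsumA K s pts n e ∧
        RsumB K s pts m b * φ = ψ * RsumB K s pts n e) ↔
    (∀ k, n k ≤ m k ∧ ∀ i, 1 ≤ i → i ≤ n k → e k i ≤ b k i) :=
  regular_subrep_iff_general K s pts hpts m n b e hb_mono he_pos he_mono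
end

section
/- For a single point p: the regular Kronecker representation ⊕_{j=1}^n R_{p,e_j} (with e_1 ≥ ... ≥ e_n) embeds into ⊕_{i=1}^m R_{p,b_i} (with b_1 ≥ ... ≥ b_m) if and only if m ≥ n and b_i ≥ e_i for all 1 ≤ i ≤ n. Equivalently, for nilpotent operators: given nilpotent endomorphisms with Jordan types (b_1,...,b_m) and (e_1,...,e_n), there is an injective linear map intertwining them if and only if m ≥ n and b_i ≥ e_i for all i ≤ n. -/
open Matrix

/-- The map `β` of the regular Kronecker representation `⊕ᵢ R_{p, b i}` at a single
finite point `p`: block diagonal with blocks `p·I + J` (`J` the nilpotent upper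
Jordan block).  The map `α` is the identity. -/
def RpB (K : Type*) [Field K] (p : K) (m : ℕ) (b : ℕ → ℕ) :
    Matrix (Σ i : Fin m, Fin (b (i.1 + 1))) (Σ i : Fin m, Fin (b (i.1 + 1))) K :=
  fun x y =>
    if x.1 = y.1 then
      (if (x.2 : ℕ) = (y.2 : ℕ) then p else 0) +
        (if (y.2 : ℕ) = (x.2 : ℕ) + 1 then 1 else 0)
    else 0

/-- Block diagonal nilpotent matrix with upper Jordan blocks of sizes `b 1, …, b m`
(a nilpotent endomorphism of Jordan type `(b 1, …, b m)`). -/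
def Jnil (K : Type*) [Field K] (m : ℕ) (b : ℕ → ℕ) :
    Matrix (Σ i : Fin m, Fin (b (i.1 + 1))) (Σ i : Fin m, Fin (b (i.1 + 1))) K :=
  fun x y => if x.1 = y.1 ∧ (y.2 : ℕ) = (x.2 : ℕ) + 1 then 1 else 0

/-! For a nilpotent matrix of Jordan type `β`, the subspace `ker J ⊓ range J ^ k` is spanned by
the head coordinates of the blocks of size `> k`, so its dimension is `#{i | k < β i}`. An
injective intertwiner maps this subspace for the source injectively into the one for the target,
whence `#{j | k < e j} ≤ #{i | k < b i}` for all `k`; for decreasing sequences this is exactly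
`n ≤ m` and `e i ≤ b i`. Conversely, embedding each block `K ^ e i` into `K ^ b i` as its first
coordinates intertwines the two shifts. A morphism of the Kronecker representations is a single
matrix commuting with `p • 1 + J`, that is, with `J`. -/

open Module LinearMap Function Finset

theorem finrank_ker_inf_range_pow_le {K V W : Type*} [DivisionRing K]
    [AddCommGroup V] [Module K V] [AddCommGroup W] [Module K W] [FiniteDimensional K W]
    {f : Module.End K V} {g : Module.End K W} {T : V →ₗ[K] W} (hT : Injective T)
    (hfg : Semiconj T f g) (k : ℕ) :
    finrank K ↥(ker f ⊓ range (f ^ k)) ≤ finrank K ↥(ker g ⊓ range (g ^ k)) := by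
  have hmap : (ker f ⊓ range (f ^ k)).map T ≤ ker g ⊓ range (g ^ k) := by
    rintro _ ⟨v, ⟨hv, w, hw⟩, rfl⟩
    refine ⟨?_, T w, ?_⟩
    · rw [SetLike.mem_coe, mem_ker] at hv ⊢
      rw [← hfg v, hv, map_zero]
    · rw [← hw, Module.End.coe_pow, Module.End.coe_pow, (hfg.iterate_right k) w]
  exact (Submodule.equivMapOfInjective T hT _).finrank_eq.trans_le (Submodule.finrank_mono hmap)

section Blocks

variable {K : Type*} [Field K] {ι : Type*} {β : ι → ℕ}

-- `Jnil K m b` is `jordanNil K fun i : Fin m => b (i + 1)` by definition.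
variable (K β) in
def jordanNil [DecidableEq ι] : Matrix (Σ i, Fin (β i)) (Σ i, Fin (β i)) K :=
  fun x y => if x.1 = y.1 ∧ (y.2 : ℕ) = x.2 + 1 then 1 else 0

-- Block coordinates padded by zero, on which `jordanNil` acts as the shift `t ↦ t + 1`.
def blockExt : ((Σ i, Fin (β i)) → K) →ₗ[K] ι → ℕ → K where
  toFun v i t := if h : t < β i then v ⟨i, t, h⟩ else 0
  map_add' v w := by
    funext i t
    split_ifs <;> simp [*]
  map_smul' c v := by
    funext i t
    split_ifs <;> simp [*]

theorem blockExt_of_lt (v : (Σ i, Fin (β i)) → K) {i : ι} {t : ℕ} (h : t < β i) :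
    blockExt v i t = v ⟨i, t, h⟩ :=
  dif_pos h

@[simp]
theorem blockExt_apply (v : (Σ i, Fin (β i)) → K) (x : Σ i, Fin (β i)) :
    blockExt v x.1 x.2 = v x :=
  blockExt_of_lt v x.2.isLt

theorem blockExt_of_le (v : (Σ i, Fin (β i)) → K) {i : ι} {t : ℕ} (h : β i ≤ t) :
    blockExt v i t = 0 :=
  dif_neg h.not_gt

theorem blockExt_injective : Injective (blockExt (K := K) (β := β)) := fun v w h =>
  funext fun x => by rw [← blockExt_apply v, ← blockExt_apply w, h]

theorem blockExt_jordanNil_mulVec [Fintype ι] [DecidableEq ι] (v : (Σ i, Fin (β i)) → K)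
    (i : ι) (t : ℕ) : blockExt (jordanNil K β *ᵥ v) i t = blockExt v i (t + 1) := by
  by_cases ht : t < β i
  · rw [blockExt_of_lt _ ht]
    simp only [mulVec, dotProduct, jordanNil, ite_and, ite_mul, one_mul, zero_mul,
      Fintype.sum_sigma, Finset.sum_ite_irrel, Finset.sum_const_zero, Finset.sum_ite_eq,
      Finset.mem_univ, ↓reduceIte]
    by_cases ht' : t + 1 < β i
    · simp [← Fin.ext_iff (b := ⟨t + 1, ht'⟩), blockExt_of_lt v ht']
    · rw [blockExt_of_le v (by omega)]
      exact Finset.sum_eq_zero fun s _ => if_neg fun hs => ht' (by omega)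
  · rw [blockExt_of_le _ (by omega), blockExt_of_le _ (by omega)]

theorem blockExt_jordanNil_pow [Fintype ι] [DecidableEq ι] (k : ℕ) (v : (Σ i, Fin (β i)) → K)
    (i : ι) (t : ℕ) :
    blockExt (((jordanNil K β).mulVecLin ^ k) v) i t = blockExt v i (t + k) := by
  induction k generalizing v t with
  | zero => rfl
  | succ k ih =>
    rw [pow_succ, Module.End.mul_apply, ih, mulVecLin_apply, blockExt_jordanNil_mulVec,
      add_assoc]

variable (β) in
def headSlots (k : ℕ) : Set (Σ i, Fin (β i)) := {x | (x.2 : ℕ) = 0 ∧ k < β x.1}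

theorem ker_inf_range_pow_jordanNil [Fintype ι] [DecidableEq ι] (k : ℕ) :
    ker (jordanNil K β).mulVecLin ⊓ range ((jordanNil K β).mulVecLin ^ k) =
      ⨅ x ∈ (headSlots β k)ᶜ, ker (proj x) := by
  set J := (jordanNil K β).mulVecLin
  ext v
  simp only [Submodule.mem_inf, Submodule.mem_iInf, mem_ker, proj_apply]
  constructor
  · rintro ⟨hker, w, rfl⟩ x hx
    rw [← blockExt_apply ((J ^ k) w)]
    obtain ht | ⟨s, hs⟩ : (x.2 : ℕ) = 0 ∨ ∃ s, (x.2 : ℕ) = s + 1 :=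
      (Nat.eq_zero_or_eq_succ_pred _).imp_right fun h => ⟨_, h⟩
    · have hk : β x.1 ≤ k := by simpa [headSlots, ht] using hx
      rw [blockExt_jordanNil_pow, blockExt_of_le _ (by omega)]
    · have hshift : blockExt ((J ^ k) w) x.1 (s + 1) = blockExt (J ((J ^ k) w)) x.1 s :=
        (blockExt_jordanNil_mulVec _ _ _).symm
      rw [hs, hshift, hker, map_zero]
      rfl
  · intro hv
    have hvanish : ∀ i t, (t ≠ 0 ∨ β i ≤ k) → blockExt v i t = 0 := by
      intro i t h
      by_cases ht : t < β i
      · rw [blockExt_of_lt v ht]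
        exact hv _ fun ⟨h0, hk⟩ => by dsimp only at h0 hk; omega
      · exact blockExt_of_le v (by omega)
    refine ⟨?_, fun x => if (x.2 : ℕ) = k then blockExt v x.1 0 else 0, ?_⟩
    · ext x
      rw [← blockExt_apply (J v), mulVecLin_apply, blockExt_jordanNil_mulVec,
        hvanish _ _ (.inl (Nat.succ_ne_zero _)), Pi.zero_apply]
    · refine blockExt_injective (funext₂ fun i t => ?_)
      rw [blockExt_jordanNil_pow]
      by_cases hlt : t + k < β i
      · rw [blockExt_of_lt _ hlt]
        dsimp only
        split_ifs with htk
        · rw [show t = 0 by omega]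
        · exact (hvanish i t (.inl (by omega))).symm
      · rw [blockExt_of_le _ (by omega), hvanish i t (by omega)]

theorem finrank_ker_inf_range_pow_jordanNil [Fintype ι] [DecidableEq ι] (k : ℕ) :
    finrank K ↥(ker (jordanNil K β).mulVecLin ⊓ range ((jordanNil K β).mulVecLin ^ k)) =
      #{i | k < β i} := by
  classical
  rw [ker_inf_range_pow_jordanNil, (iInfKerProjEquiv K (fun _ => K) disjoint_compl_right
    (by simp)).finrank_eq, finrank_fintype_fun_eq_card, ← Fintype.card_subtype]
  refine Fintype.card_congr
    { toFun x := ⟨x.1.1, x.2.2⟩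
      invFun i := ⟨⟨i, 0, by omega⟩, rfl, i.2⟩
      left_inv := ?_
      right_inv _ := rfl }
  rintro ⟨⟨i, t⟩, ht, hk⟩
  exact Subtype.ext (Sigma.ext rfl (heq_of_eq (Fin.ext ht.symm)))

variable {ι' : Type*} {ε : ι' → ℕ}

variable (K β ε) in
noncomputable def blockInclusion (σ : ι' → ι) :
    ((Σ j, Fin (ε j)) → K) →ₗ[K] (Σ i, Fin (β i)) → K where
  toFun v x := extend σ (blockExt v) 0 x.1 x.2
  map_add' v w := by
    classical
    funext x
    simp only [extend_def, map_add, Pi.add_apply]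
    split_ifs <;> simp
  map_smul' c v := by
    classical
    funext x
    simp only [extend_def, map_smul, Pi.smul_apply, RingHom.id_apply]
    split_ifs <;> simp

theorem blockExt_blockInclusion {σ : ι' → ι} (hσ : Injective σ) (hεβ : ∀ j, ε j ≤ β (σ j))
    (v : (Σ j, Fin (ε j)) → K) (i : ι) (t : ℕ) :
    blockExt (blockInclusion K β ε σ v) i t = extend σ (blockExt v) 0 i t := by
  by_cases ht : t < β i
  · exact blockExt_of_lt _ ht
  · rw [blockExt_of_le _ (by omega)]
    by_cases hi : ∃ j, σ j = i
    · obtain ⟨j, rfl⟩ := hi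
      rw [hσ.extend_apply, blockExt_of_le _ ((hεβ j).trans (by omega))]
    · rw [extend_apply' _ _ _ hi]
      rfl

theorem blockInclusion_injective {σ : ι' → ι} (hσ : Injective σ) (hεβ : ∀ j, ε j ≤ β (σ j)) :
    Injective (blockInclusion K β ε σ) := fun v w h =>
  blockExt_injective (funext₂ fun j t => by
    simpa only [blockExt_blockInclusion hσ hεβ, hσ.extend_apply] using
      congrFun₂ (congrArg blockExt h) (σ j) t)

theorem jordanNil_mul_toMatrix'_blockInclusion [Fintype ι] [DecidableEq ι] [Fintype ι']
    [DecidableEq ι'] {σ : ι' → ι} (hσ : Injective σ) (hεβ : ∀ j, ε j ≤ β (σ j)) :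
    jordanNil K β * toMatrix' (blockInclusion K β ε σ) =
      toMatrix' (blockInclusion K β ε σ) * jordanNil K ε := by
  refine Matrix.toLin'.injective
    (LinearMap.ext fun v => blockExt_injective (funext₂ fun i t => ?_))
  simp only [Matrix.toLin'_mul, Matrix.toLin'_toMatrix', LinearMap.comp_apply,
    Matrix.toLin'_apply, blockExt_jordanNil_mulVec, blockExt_blockInclusion hσ hεβ]
  by_cases hi : ∃ j, σ j = i
  · obtain ⟨j, rfl⟩ := hi
    rw [hσ.extend_apply, hσ.extend_apply, blockExt_jordanNil_mulVec]
  · rw [extend_apply' _ _ _ hi, extend_apply' _ _ _ hi]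
    rfl

end Blocks

theorem exists_castLE_le_of_card_lt_le {m n : ℕ} {β : Fin m → ℕ} {ε : Fin n → ℕ}
    (hβ : Antitone β) (hε : Antitone ε) (hε_pos : ∀ j, 0 < ε j)
    (hcard : ∀ k, #{j | k < ε j} ≤ #{i | k < β i}) :
    ∃ h : n ≤ m, ∀ j, ε j ≤ β (Fin.castLE h j) := by
  have hnm : n ≤ m := calc
    n = #{j | 0 < ε j} := by
      rw [filter_true_of_mem fun j _ => hε_pos j, card_univ, Fintype.card_fin]
    _ ≤ #{i | 0 < β i} := hcard 0
    _ ≤ m := (card_filter_le _ _).trans_eq (by rw [card_univ, Fintype.card_fin])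
  refine ⟨hnm, fun j => not_lt.1 fun hlt => ?_⟩
  have hlower : (j : ℕ) + 1 ≤ #{j' | β (Fin.castLE hnm j) < ε j'} := by
    rw [← Fin.card_Iic j]
    exact card_le_card fun j' hj' =>
      mem_filter.2 ⟨mem_univ _, hlt.trans_le (hε (mem_Iic.1 hj'))⟩
  have hupper : #{i | β (Fin.castLE hnm j) < β i} ≤ j := by
    rw [← Fin.val_castLE hnm j, ← Fin.card_Iio]
    exact card_le_card fun i hi => mem_Iio.2 (not_le.1 fun hle =>
      (hβ hle).not_gt (mem_filter.1 hi).2)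
  have := hcard (β (Fin.castLE hnm j))
  omega

section Nilpotent

variable {K : Type*} [Field K]

theorem exists_injective_intertwiner_jordanNil_iff {m n : ℕ} {β : Fin m → ℕ} {ε : Fin n → ℕ}
    (hβ : Antitone β) (hε : Antitone ε) (hε_pos : ∀ j, 0 < ε j) :
    (∃ T : Matrix (Σ i, Fin (β i)) (Σ j, Fin (ε j)) K,
        Injective T.mulVecLin ∧ jordanNil K β * T = T * jordanNil K ε) ↔
      ∃ h : n ≤ m, ∀ j, ε j ≤ β (Fin.castLE h j) := by
  constructor
  · rintro ⟨T, hT, hJT⟩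
    refine exists_castLE_le_of_card_lt_le hβ hε hε_pos fun k => ?_
    rw [← finrank_ker_inf_range_pow_jordanNil (K := K),
      ← finrank_ker_inf_range_pow_jordanNil (K := K)]
    refine finrank_ker_inf_range_pow_le hT (fun v => ?_) k
    simp only [mulVecLin_apply, mulVec_mulVec, hJT]
  · rintro ⟨h, hεβ⟩
    refine ⟨toMatrix' (blockInclusion K β ε (Fin.castLE h)), ?_,
      jordanNil_mul_toMatrix'_blockInclusion (Fin.castLE_injective h) hεβ⟩
    rw [← Matrix.toLin'_apply', Matrix.toLin'_toMatrix']
    exact blockInclusion_injective (Fin.castLE_injective h) hεβ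

theorem RpB_eq_smul_one_add_Jnil (p : K) (m : ℕ) (b : ℕ → ℕ) :
    RpB K p m b = p • (1 : Matrix _ _ K) + Jnil K m b := by
  ext ⟨i, s⟩ ⟨j, t⟩
  rcases eq_or_ne i j with rfl | hij
  · simp [RpB, Jnil, one_apply, Fin.val_inj]
  · simp [RpB, Jnil, one_apply, hij]

theorem RpB_mul_eq_mul_RpB_iff (p : K) {m n : ℕ} {b e : ℕ → ℕ}
    (φ : Matrix (Σ i : Fin m, Fin (b (i.1 + 1))) (Σ j : Fin n, Fin (e (j.1 + 1))) K) :
    RpB K p m b * φ = φ * RpB K p n e ↔ Jnil K m b * φ = φ * Jnil K n e := by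
  rw [RpB_eq_smul_one_add_Jnil, RpB_eq_smul_one_add_Jnil, Matrix.add_mul, Matrix.mul_add,
    Matrix.smul_mul, Matrix.mul_smul, Matrix.one_mul, Matrix.mul_one, add_right_inj]

end Nilpotent

theorem forall_fin_succ_iff_forall_Icc {n : ℕ} {P : ℕ → Prop} :
    (∀ j : Fin n, P (j + 1)) ↔ ∀ i, 1 ≤ i → i ≤ n → P i :=
  ⟨fun h i h1 hn => by
    obtain ⟨j, rfl⟩ : ∃ j, i = j + 1 := ⟨i - 1, by omega⟩
    exact h ⟨j, by omega⟩, fun h j => h _ (by omega) (by omega)⟩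

theorem regular_one_point_subrep_iff_general (K : Type*) [Field K] (p : K)
    (m n : ℕ) (b e : ℕ → ℕ)
    (hb_mono : ∀ i j, 1 ≤ i → i ≤ j → j ≤ m → b j ≤ b i)
    (he_pos : ∀ i, 1 ≤ i → i ≤ n → 1 ≤ e i)
    (he_mono : ∀ i j, 1 ≤ i → i ≤ j → j ≤ n → e j ≤ e i) :
    ((∃ (ψ φ : Matrix (Σ i : Fin m, Fin (b (i.1 + 1))) (Σ j : Fin n, Fin (e (j.1 + 1))) K),
        Function.Injective ψ.mulVecLin ∧ Function.Injective φ.mulVecLin ∧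
        (1 : Matrix _ _ K) * φ = ψ * (1 : Matrix _ _ K) ∧
        RpB K p m b * φ = ψ * RpB K p n e) ↔
      (n ≤ m ∧ ∀ i, 1 ≤ i → i ≤ n → e i ≤ b i)) ∧
    ((∃ T : Matrix (Σ i : Fin m, Fin (b (i.1 + 1))) (Σ j : Fin n, Fin (e (j.1 + 1))) K,
        Function.Injective T.mulVecLin ∧ Jnil K m b * T = T * Jnil K n e) ↔
      (n ≤ m ∧ ∀ i, 1 ≤ i → i ≤ n → e i ≤ b i)) := by
  have hβ : Antitone fun i : Fin m => b (i + 1) := fun i j hij =>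
    hb_mono _ _ (by omega) (by simpa using Fin.le_iff_val_le_val.1 hij) (by omega)
  have hε : Antitone fun j : Fin n => e (j + 1) := fun i j hij =>
    he_mono _ _ (by omega) (by simpa using Fin.le_iff_val_le_val.1 hij) (by omega)
  have hε_pos : ∀ j : Fin n, 0 < e (j + 1) := fun j => he_pos _ (by omega) (by omega)
  have hnil : (∃ T : Matrix (Σ i : Fin m, Fin (b (i.1 + 1))) (Σ j : Fin n, Fin (e (j.1 + 1))) K,
        Injective T.mulVecLin ∧ Jnil K m b * T = T * Jnil K n e) ↔
      (n ≤ m ∧ ∀ i, 1 ≤ i → i ≤ n → e i ≤ b i) := by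
    refine (exists_injective_intertwiner_jordanNil_iff hβ hε hε_pos).trans ?_
    simp only [Fin.val_castLE, exists_prop]
    exact and_congr_right fun _ => forall_fin_succ_iff_forall_Icc (P := fun i => e i ≤ b i)
  refine ⟨Iff.trans ⟨?_, ?_⟩ hnil, hnil⟩
  · rintro ⟨ψ, φ, -, hφ, hψφ, hRφ⟩
    obtain rfl : φ = ψ := (Matrix.one_mul φ).symm.trans (hψφ.trans (Matrix.mul_one ψ))
    exact ⟨φ, hφ, (RpB_mul_eq_mul_RpB_iff p φ).1 hRφ⟩
  · rintro ⟨T, hT, hJT⟩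
    exact ⟨T, T, hT, hT, (Matrix.one_mul T).trans (Matrix.mul_one T).symm,
      (RpB_mul_eq_mul_RpB_iff p T).2 hJT⟩

/-- Theorem 11, one point: `⊕ⱼ R_{p, e j}` embeds into `⊕ᵢ R_{p, b i}`
iff `m ≥ n` and `b i ≥ e i` for `1 ≤ i ≤ n`; equivalently, for nilpotent operators
of Jordan types `(b i)` and `(e j)` there is an injective intertwining linear map
iff the same numerical condition holds. -/
theorem regular_one_point_subrep_iff (K : Type*) [Field K] (p : K)
    (m n : ℕ) (b e : ℕ → ℕ)
    (hb_pos : ∀ i, 1 ≤ i → i ≤ m → 1 ≤ b i)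
    (hb_mono : ∀ i j, 1 ≤ i → i ≤ j → j ≤ m → b j ≤ b i)
    (he_pos : ∀ i, 1 ≤ i → i ≤ n → 1 ≤ e i)
    (he_mono : ∀ i j, 1 ≤ i → i ≤ j → j ≤ n → e j ≤ e i) :
    ((∃ (ψ φ : Matrix (Σ i : Fin m, Fin (b (i.1 + 1))) (Σ j : Fin n, Fin (e (j.1 + 1))) K),
        Function.Injective ψ.mulVecLin ∧ Function.Injective φ.mulVecLin ∧
        (1 : Matrix _ _ K) * φ = ψ * (1 : Matrix _ _ K) ∧
        RpB K p m b * φ = ψ * RpB K p n e) ↔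
      (n ≤ m ∧ ∀ i, 1 ≤ i → i ≤ n → e i ≤ b i)) ∧
    ((∃ T : Matrix (Σ i : Fin m, Fin (b (i.1 + 1))) (Σ j : Fin n, Fin (e (j.1 + 1))) K,
        Function.Injective T.mulVecLin ∧ Jnil K m b * T = T * Jnil K n e) ↔
      (n ≤ m ∧ ∀ i, 1 ≤ i → i ≤ n → e i ≤ b i)) :=
  regular_one_point_subrep_iff_general K p m n b e hb_mono he_pos he_mono
end

section
/- Let a ≥ d ≥ 1 and let φ1 be an (a−1)×(d−1) matrix and φ2 an a×d matrix over a field such that [I;0]·φ1 = φ2·[I;0] and [0;I]·φ1 = φ2·[0;I] (where [I;0]: K^{k−1} → K^k is the inclusion into the first k−1 coordinates and [0;I] the inclusion into the last k−1 coordinates, with k = d on the right and k = a on the left). Then there exist scalars x_1, ..., x_{a−d+1} such that (φ2)_{u,v} = x_{u−v+1} when 0 ≤ u−v ≤ a−d and (φ2)_{u,v} = 0 otherwise, and similarly for φ1; i.e., every homomorphism Q_d → Q_a of Kronecker representations is given by a banded lower-triangular Toeplitz pair. Moreover, if a < d, then φ1 = 0 and φ2 = 0. -/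
/-!
Extend `φ₁` and `φ₂` by zero to functions `ℕ → ℕ → K`. The relation for `α` says that `φ₁` is the
top-left corner of `φ₂`; given that, the relation for `β` says that `φ₂` is constant along
diagonals and vanishes in row `0` off column `0`. Sliding an entry `(u, v)` of `φ₂` along its
diagonal to column `0` (or, above the diagonal, to row `0`) gives the Toeplitz symbol (or `0`);
sliding it to the last column `d - 1` lands in row `u - v + d - 1`, outside `φ₂` unless
`u - v ≤ a - d`.
-/

open Matrix

/-- The inclusion `[I;0] : K^{k-1} → K^k` (the map `α` of `Q_k`). -/
def incA (K : Type*) [Field K] (k : ℕ) : Matrix (Fin k) (Fin (k - 1)) K :=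
  fun u v => if (u : ℕ) = (v : ℕ) then 1 else 0

/-- The inclusion `[0;I] : K^{k-1} → K^k` (the map `β` of `Q_k`). -/
def incB (K : Type*) [Field K] (k : ℕ) : Matrix (Fin k) (Fin (k - 1)) K :=
  fun u v => if (u : ℕ) = (v : ℕ) + 1 then 1 else 0

section BandedToeplitz

variable {α : Type*} {f : ℕ → ℕ → α} {a d : ℕ}

theorem apply_add_add_of_diag_step (hstep : ∀ i j, j + 1 < d → f (i + 1) (j + 1) = f i j)
    (i j k : ℕ) (hjk : j + k < d) : f (i + k) (j + k) = f i j := by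
  induction k with
  | zero => rfl
  | succ k ih => rw [← ih (by omega), ← add_assoc, ← add_assoc, hstep _ _ (by omega)]

-- The band `i + d ≤ j + a` avoids truncated subtraction, so it is empty when `a < d`.
theorem eq_banded_toeplitz [Zero α] (hstep : ∀ i j, j + 1 < d → f (i + 1) (j + 1) = f i j)
    (htop : ∀ j, j + 1 < d → f 0 (j + 1) = 0) (hbottom : ∀ i j, a ≤ i → f i j = 0)
    (i j : ℕ) (hj : j < d) :
    f i j = if j ≤ i ∧ i + d ≤ j + a then f (i - j) 0 else 0 := by
  rcases lt_or_ge i j with hij | hji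
  · obtain ⟨m, rfl⟩ := Nat.exists_eq_add_of_lt hij
    rw [if_neg (by omega), ← htop m (by omega),
      ← apply_add_add_of_diag_step hstep 0 (m + 1) i (by omega)]
    ring_nf
  · have hdiag : f i j = f (i - j) 0 := by
      simpa [Nat.sub_add_cancel hji] using
        apply_add_add_of_diag_step hstep (i - j) 0 j (by omega)
    split_ifs with hband
    · exact hdiag
    · rw [← apply_add_add_of_diag_step hstep i j (d - 1 - j) (by omega)]
      exact hbottom _ _ (by omega)

end BandedToeplitz

section ZeroExtend

variable {α : Type*} [Zero α] {m n : ℕ}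

def zeroExtend (M : Matrix (Fin m) (Fin n) α) (i j : ℕ) : α :=
  if h : i < m ∧ j < n then M ⟨i, h.1⟩ ⟨j, h.2⟩ else 0

@[simp]
theorem zeroExtend_val (M : Matrix (Fin m) (Fin n) α) (u : Fin m) (v : Fin n) :
    zeroExtend M u v = M u v := by
  simp [zeroExtend]

theorem zeroExtend_of_le_left (M : Matrix (Fin m) (Fin n) α) {i : ℕ} (hi : m ≤ i) (j : ℕ) :
    zeroExtend M i j = 0 :=
  dif_neg fun h => by omega

end ZeroExtend

section Inclusions

variable {K : Type*} [Field K] {ι : Type*} {m n : ℕ}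

theorem incA_mul_apply (M : Matrix (Fin (m - 1)) (Fin n) K) (u : Fin m) (j : Fin n) :
    (incA K m * M) u j = zeroExtend M u j := by
  simp only [mul_apply, incA, ite_mul, one_mul, zero_mul, zeroExtend, j.2, and_true]
  split_ifs with hu
  · exact (Fintype.sum_eq_single ⟨u, hu⟩
      fun w hw => if_neg fun h => hw (Fin.ext h.symm)).trans (if_pos rfl)
  · exact Finset.sum_eq_zero fun w _ => if_neg (by omega)

theorem incB_mul_apply (M : Matrix (Fin (m - 1)) (Fin n) K) (u : Fin m) (j : Fin n) :
    (incB K m * M) u j = if (u : ℕ) = 0 then 0 else zeroExtend M (u - 1) j := by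
  simp only [mul_apply, incB, ite_mul, one_mul, zero_mul, zeroExtend, j.2, and_true]
  split_ifs with hu hu'
  · exact Finset.sum_eq_zero fun w _ => if_neg (by omega)
  · exact (Fintype.sum_eq_single ⟨u - 1, hu'⟩
      fun w hw => if_neg fun h => hw (Fin.ext (by simp; omega))).trans (if_pos (by simp; omega))
  · exact Finset.sum_eq_zero fun w _ => if_neg (by omega)

theorem mul_incA_apply (M : Matrix ι (Fin m) K) (u : ι) (j : Fin (m - 1)) :
    (M * incA K m) u j = M u (Fin.castLE (Nat.sub_le m 1) j) := by
  simp only [mul_apply, incA, mul_ite, mul_one, mul_zero]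
  exact (Fintype.sum_eq_single (Fin.castLE (Nat.sub_le m 1) j)
    fun w hw => if_neg fun h => hw (Fin.ext h)).trans (if_pos rfl)

theorem mul_incB_apply (M : Matrix ι (Fin m) K) (u : ι) (j : Fin (m - 1)) :
    (M * incB K m) u j = M u ⟨j + 1, by omega⟩ := by
  simp only [mul_apply, incB, mul_ite, mul_one, mul_zero]
  exact (Fintype.sum_eq_single (⟨j + 1, by omega⟩ : Fin m)
    fun w hw => if_neg fun h => hw (Fin.ext h)).trans (if_pos rfl)

variable {a d : ℕ} {φ₁ : Matrix (Fin (a - 1)) (Fin (d - 1)) K} {φ₂ : Matrix (Fin a) (Fin d) K}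

theorem zeroExtend_eq_of_incA_intertwines (h : incA K a * φ₁ = φ₂ * incA K d) (i j : ℕ)
    (hj : j < d - 1) : zeroExtend φ₂ i j = zeroExtend φ₁ i j := by
  rcases lt_or_ge i a with hi | hi
  · have hij := congr_fun₂ h ⟨i, hi⟩ ⟨j, hj⟩
    rw [incA_mul_apply, mul_incA_apply, ← zeroExtend_val φ₂] at hij
    simpa using hij.symm
  · rw [zeroExtend_of_le_left _ hi, zeroExtend_of_le_left _ (by omega)]

theorem zeroExtend_succ_eq_of_incB_intertwines (h : incB K a * φ₁ = φ₂ * incB K d) (i j : ℕ)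
    (hj : j < d - 1) :
    zeroExtend φ₂ i (j + 1) = if i = 0 then 0 else zeroExtend φ₁ (i - 1) j := by
  rcases lt_or_ge i a with hi | hi
  · have hij := congr_fun₂ h ⟨i, hi⟩ ⟨j, hj⟩
    rw [incB_mul_apply, mul_incB_apply, ← zeroExtend_val φ₂] at hij
    simpa using hij.symm
  · rw [zeroExtend_of_le_left _ hi]
    split_ifs
    · rfl
    · exact (zeroExtend_of_le_left _ (by omega) _).symm

end Inclusions

theorem hom_Q_structure_general (K : Type*) [Field K] (a d : ℕ)
    (φ₁ : Matrix (Fin (a - 1)) (Fin (d - 1)) K) (φ₂ : Matrix (Fin a) (Fin d) K)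
    (h₁ : incA K a * φ₁ = φ₂ * incA K d) (h₂ : incB K a * φ₁ = φ₂ * incB K d) :
    (d ≤ a → ∃ x : ℕ → K,
      (∀ u v, φ₂ u v = if (v : ℕ) ≤ (u : ℕ) ∧ (u : ℕ) - (v : ℕ) ≤ a - d then
        x ((u : ℕ) - (v : ℕ)) else 0) ∧
      (∀ u v, φ₁ u v = if (v : ℕ) ≤ (u : ℕ) ∧ (u : ℕ) - (v : ℕ) ≤ a - d then
        x ((u : ℕ) - (v : ℕ)) else 0)) ∧
    (a < d → φ₁ = 0 ∧ φ₂ = 0) := by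
  have hA := zeroExtend_eq_of_incA_intertwines h₁
  have hB := zeroExtend_succ_eq_of_incB_intertwines h₂
  have hband := eq_banded_toeplitz (f := zeroExtend φ₂) (a := a) (d := d)
    (fun i j hj => by rw [hB _ _ (by omega), if_neg i.succ_ne_zero, Nat.add_sub_cancel,
      hA _ _ (by omega)])
    (fun j hj => by rw [hB _ _ (by omega), if_pos rfl])
    (fun i j hi => zeroExtend_of_le_left _ hi j)
  have hφ₂ : ∀ u v, φ₂ u v = if (v : ℕ) ≤ u ∧ (u : ℕ) + d ≤ v + a then
      zeroExtend φ₂ (u - v) 0 else 0 := fun u v => by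
    rw [← zeroExtend_val φ₂, hband _ _ v.2]
  have hφ₁ : ∀ u v, φ₁ u v = if (v : ℕ) ≤ u ∧ (u : ℕ) + d ≤ v + a then
      zeroExtend φ₂ (u - v) 0 else 0 := fun u v => by
    rw [← zeroExtend_val φ₁, ← hA _ _ v.2, hband _ _ (by omega)]
  refine ⟨fun hda => ⟨fun t => zeroExtend φ₂ t 0, fun u v => ?_, fun u v => ?_⟩,
    fun had => ⟨?_, ?_⟩⟩
  · exact (hφ₂ u v).trans (if_congr (by omega) rfl rfl)
  · exact (hφ₁ u v).trans (if_congr (by omega) rfl rfl)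
  · ext u v
    exact (hφ₁ u v).trans (if_neg (by omega))
  · ext u v
    exact (hφ₂ u v).trans (if_neg (by omega))

/-- every homomorphism `(φ₁, φ₂) : Q_d → Q_a` of Kronecker
representations is a banded lower-triangular Toeplitz pair when `a ≥ d`, and is
zero when `a < d`. -/
theorem hom_Q_structure (K : Type*) [Field K] (a d : ℕ) (ha : 1 ≤ a) (hd : 1 ≤ d)
    (φ₁ : Matrix (Fin (a - 1)) (Fin (d - 1)) K) (φ₂ : Matrix (Fin a) (Fin d) K)
    (h₁ : incA K a * φ₁ = φ₂ * incA K d) (h₂ : incB K a * φ₁ = φ₂ * incB K d) :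
    (d ≤ a → ∃ x : ℕ → K,
      (∀ u v, φ₂ u v = if (v : ℕ) ≤ (u : ℕ) ∧ (u : ℕ) - (v : ℕ) ≤ a - d then
        x ((u : ℕ) - (v : ℕ)) else 0) ∧
      (∀ u v, φ₁ u v = if (v : ℕ) ≤ (u : ℕ) ∧ (u : ℕ) - (v : ℕ) ≤ a - d then
        x ((u : ℕ) - (v : ℕ)) else 0)) ∧
    (a < d → φ₁ = 0 ∧ φ₂ = 0) :=
  hom_Q_structure_general K a d φ₁ φ₂ h₁ h₂
end

section
/- Let N and M be Kronecker representations over an infinite field K and let φ = (φ^1, φ^2) be the generic homomorphism from N to M (entries of φ^1, φ^2 are elements of a rational function field F over K constrained only by the intertwining equations, parametrizing Hom_K(N,M) generically). Then N is a subrepresentation of M over K if and only if φ^1 and φ^2, viewed as matrices over F, both have full column rank. -/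
/-!
A matrix over a field is injective iff one of its maximal minors is nonzero. Specializing the
generic homomorphism at a point `v` computes its minors by evaluating those over `K[x]` at `v`.
So a monomorphism `N → M`, which is a specialization by genericity, exhibits nonzero minors of
`φ¹` and `φ²`; conversely, if such minors are nonzero, their product is a nonzero polynomial,
which does not vanish at some `K`-point because `K` is infinite, and the specialization there
is a monomorphism.
-/

open Matrix

namespace Matrix

variable {K : Type*} [Field K] {m n : Type*} [Fintype n] [DecidableEq n]

theorem injective_mulVecLin_of_det_submatrix_ne_zero {A : Matrix m n K} {f : n → m}
    (hf : (A.submatrix f id).det ≠ 0) : Function.Injective A.mulVecLin := by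
  intro v w hvw
  have hsub : A.submatrix f id *ᵥ v = A.submatrix f id *ᵥ w := congrArg (· ∘ f) hvw
  exact mulVec_injective_iff_isUnit.2 ((isUnit_iff_isUnit_det _).2 hf.isUnit) hsub

variable [Fintype m]

theorem exists_det_submatrix_ne_zero_of_injective_mulVecLin {A : Matrix m n K}
    (hA : Function.Injective A.mulVecLin) : ∃ f : n → m, (A.submatrix f id).det ≠ 0 := by
  have hrank : A.rank = Fintype.card n := by
    rw [rank, LinearMap.finrank_range_of_inj hA, Module.finrank_fintype_fun_eq_card]
  have hrows := Submodule.exists_fun_fin_finrank_span_eq K (Set.range A.row)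
  rw [← A.rank_eq_finrank_span_row, hrank] at hrows
  obtain ⟨r, hr_rows, -, hr_indep⟩ := hrows
  choose g hg using hr_rows
  let e := Fintype.equivFin n
  refine ⟨g ∘ e, ?_⟩
  rw [← isUnit_iff_ne_zero, ← isUnit_iff_isUnit_det, ← linearIndependent_rows_iff_isUnit]
  have hsub_rows : (A.submatrix (g ∘ e) id).row = r ∘ e := funext fun i => hg (e i)
  rw [hsub_rows]
  exact hr_indep.comp e e.injective

theorem injective_mulVecLin_iff_exists_det_submatrix_ne_zero (A : Matrix m n K) :
    Function.Injective A.mulVecLin ↔ ∃ f : n → m, (A.submatrix f id).det ≠ 0 :=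
  ⟨exists_det_submatrix_ne_zero_of_injective_mulVecLin,
    fun ⟨_, hf⟩ => injective_mulVecLin_of_det_submatrix_ne_zero hf⟩

theorem injective_mulVecLin_map_iff {R : Type*} [CommRing R] (σ : R →+* K) (A : Matrix m n R) :
    Function.Injective (A.map σ).mulVecLin ↔ ∃ f : n → m, σ (A.submatrix f id).det ≠ 0 := by
  refine (injective_mulVecLin_iff_exists_det_submatrix_ne_zero _).trans (exists_congr fun f => ?_)
  rw [RingHom.map_det, RingHom.mapMatrix_apply, submatrix_map]

theorem injective_mulVecLin_map_of_injective_mulVecLin_map {R L : Type*} [CommRing R] [Field L]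
    {σ : R →+* K} {τ : R →+* L} (hτ : Function.Injective τ) {A : Matrix m n R}
    (hσ : Function.Injective (A.map σ).mulVecLin) : Function.Injective (A.map τ).mulVecLin := by
  obtain ⟨f, hf⟩ := (injective_mulVecLin_map_iff σ A).1 hσ
  refine (injective_mulVecLin_map_iff τ A).2 ⟨f, ?_⟩
  rw [map_ne_zero_iff τ hτ]
  exact ne_zero_of_map hf

end Matrix

theorem Matrix.mul_map_eval_eq_map_eval_mul {R σ : Type*} [CommSemiring R] {l m n p : Type*}
    [Fintype m] [Fintype n] (v : σ → R) {M : Matrix l m R} {N : Matrix n p R}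
    {X : Matrix m p (MvPolynomial σ R)} {Y : Matrix l n (MvPolynomial σ R)}
    (h : M.map (algebraMap R (MvPolynomial σ R)) * X = Y * N.map (algebraMap R (MvPolynomial σ R))) :
    M * X.map (MvPolynomial.eval v) = Y.map (MvPolynomial.eval v) * N := by
  simpa [Matrix.map_map, MvPolynomial.algebraMap_eq, Function.comp_def] using
    congrArg (·.map (MvPolynomial.eval v)) h

theorem MvPolynomial.exists_eval_ne_zero {R σ : Type*} [CommRing R] [IsDomain R] [Infinite R]
    {p : MvPolynomial σ R} (hp : p ≠ 0) : ∃ v : σ → R, eval v p ≠ 0 := by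
  by_contra! h
  exact hp (funext fun v => by simpa using h v)

/-- let `φ = (φ¹, φ²)` be a generic homomorphism from the Kronecker
representation `N = (Nα, Nβ)` to `M = (Mα, Mβ)` over an infinite field `K`: its
entries are polynomials in variables `x₁, …, x_Nv` satisfying the intertwining
equations, and every `K`-homomorphism `N → M` arises by specializing the variables.
Then `N` is a subrepresentation of `M` over `K` iff `φ¹` and `φ²`, viewed over the
rational function field `F = Frac(K[x₁,…,x_Nv])`, have full column rank. -/
theorem generic_hom_subrep_iff (K : Type*) [Field K] [Infinite K]
    (m₁ m₂ n₁ n₂ Nv : ℕ)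
    (Mα Mβ : Matrix (Fin m₂) (Fin m₁) K) (Nα Nβ : Matrix (Fin n₂) (Fin n₁) K)
    (φ₁ : Matrix (Fin m₁) (Fin n₁) (MvPolynomial (Fin Nv) K))
    (φ₂ : Matrix (Fin m₂) (Fin n₂) (MvPolynomial (Fin Nv) K))
    -- φ is a homomorphism over the polynomial ring
    (hhom₁ : Mα.map (algebraMap K (MvPolynomial (Fin Nv) K)) * φ₁ =
      φ₂ * Nα.map (algebraMap K (MvPolynomial (Fin Nv) K)))
    (hhom₂ : Mβ.map (algebraMap K (MvPolynomial (Fin Nv) K)) * φ₁ =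
      φ₂ * Nβ.map (algebraMap K (MvPolynomial (Fin Nv) K)))
    -- genericity: every K-homomorphism N → M is a specialization of φ
    (hgen : ∀ (ψ₁ : Matrix (Fin m₁) (Fin n₁) K) (ψ₂ : Matrix (Fin m₂) (Fin n₂) K),
      Mα * ψ₁ = ψ₂ * Nα → Mβ * ψ₁ = ψ₂ * Nβ →
      ∃ v : Fin Nv → K, φ₁.map (MvPolynomial.eval v) = ψ₁ ∧ φ₂.map (MvPolynomial.eval v) = ψ₂) :
    (∃ (ψ₁ : Matrix (Fin m₁) (Fin n₁) K) (ψ₂ : Matrix (Fin m₂) (Fin n₂) K),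
        Function.Injective ψ₁.mulVecLin ∧ Function.Injective ψ₂.mulVecLin ∧
        Mα * ψ₁ = ψ₂ * Nα ∧ Mβ * ψ₁ = ψ₂ * Nβ) ↔
    (Function.Injective (φ₁.map (algebraMap (MvPolynomial (Fin Nv) K)
        (FractionRing (MvPolynomial (Fin Nv) K)))).mulVecLin ∧
      Function.Injective (φ₂.map (algebraMap (MvPolynomial (Fin Nv) K)
        (FractionRing (MvPolynomial (Fin Nv) K)))).mulVecLin) := by
  have hfrac := IsFractionRing.injective (MvPolynomial (Fin Nv) K)
    (FractionRing (MvPolynomial (Fin Nv) K))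
  constructor
  · rintro ⟨ψ₁, ψ₂, hψ₁, hψ₂, hα, hβ⟩
    obtain ⟨v, rfl, rfl⟩ := hgen ψ₁ ψ₂ hα hβ
    exact ⟨injective_mulVecLin_map_of_injective_mulVecLin_map hfrac hψ₁,
      injective_mulVecLin_map_of_injective_mulVecLin_map hfrac hψ₂⟩
  · rintro ⟨h₁, h₂⟩
    obtain ⟨f₁, hf₁⟩ := (injective_mulVecLin_map_iff _ φ₁).1 h₁
    obtain ⟨f₂, hf₂⟩ := (injective_mulVecLin_map_iff _ φ₂).1 h₂
    obtain ⟨v, hv⟩ := MvPolynomial.exists_eval_ne_zero (mul_ne_zero (ne_zero_of_map hf₁)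
      (ne_zero_of_map hf₂))
    rw [map_mul] at hv
    exact ⟨φ₁.map (MvPolynomial.eval v), φ₂.map (MvPolynomial.eval v),
      (injective_mulVecLin_map_iff _ φ₁).2 ⟨f₁, left_ne_zero_of_mul hv⟩,
      (injective_mulVecLin_map_iff _ φ₂).2 ⟨f₂, right_ne_zero_of_mul hv⟩,
      mul_map_eval_eq_map_eval_mul v hhom₁, mul_map_eval_eq_map_eval_mul v hhom₂⟩
end
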